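/- arXiv:2312.01819 — 3 statements merged into one kernel-verified Lean document; each statement's English description precedes it below -/
import Mathlib

section
/- For every positive integer k and every t > 0, ∂^k ĥ₂(p(·,t))/∂t^k = (−1)^{k−1} · ∫_ℝ p_k(x,t)² dx, where ĥ₂(p(·,t)) = −(∫ p(x,t)² dx − 1) is the Tsallis entropy of order 2. Consequently, (−1)^{k−1} · ∂^k ĥ₂(p(·,t))/∂t^k ≥ 0 for every positive integer k and every t > 0; i.e., the complete monotonicity property holds for the Tsallis entropy of order 2 along the heat flow. -/
open MeasureTheory Real Filter
open scoped Classical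

/-- The density `p(x,t)` of `X + √t Z` along the heat flow. -/
noncomputable def heatP (f : ℝ → ℝ) (t x : ℝ) : ℝ :=
  ∫ y : ℝ, f y * ((Real.sqrt (2 * Real.pi * t))⁻¹ * Real.exp (-(x - y) ^ 2 / (2 * t)))

/-- `p_k(x,t) = ∂^k p / ∂x^k`. -/
noncomputable def pk (f : ℝ → ℝ) (k : ℕ) (t x : ℝ) : ℝ :=
  iteratedDeriv k (heatP f t) x

/-- `p̄_i = p_i / p`. -/
noncomputable def pbar (f : ℝ → ℝ) (i : ℕ) (t x : ℝ) : ℝ :=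
  pk f i t x / heatP f t x

/-- The Rényi entropy `h_α(p(·,t))`, with the Shannon entropy at `α = 1`. -/
noncomputable def renyiEnt (f : ℝ → ℝ) (α t : ℝ) : ℝ :=
  if α = 1 then -∫ x : ℝ, heatP f t x * Real.log (heatP f t x)
  else (1 - α)⁻¹ * Real.log (∫ x : ℝ, heatP f t x ^ α)

/-- Finiteness `|h_α(p(·,t))| < ∞` of the Rényi entropy at time `t`. -/
def renyiFinite (f : ℝ → ℝ) (α t : ℝ) : Prop :=
  if α = 1 then Integrable (fun x : ℝ => heatP f t x * Real.log (heatP f t x))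
  else Integrable (fun x : ℝ => heatP f t x ^ α) ∧ 0 < ∫ x : ℝ, heatP f t x ^ α

/-- `t < t_α` where `t_α = sup { s > 0 : |h_α(p(·,s))| < ∞ }`. -/
def ltTalpha (f : ℝ → ℝ) (α t : ℝ) : Prop :=
  ∃ s : ℝ, t < s ∧ 0 < s ∧ renyiFinite f α s

/-- The tilted expectation `E_α[g] = (∫ g p^α) / (∫ p^α)`. -/
noncomputable def Ea (f : ℝ → ℝ) (α t : ℝ) (g : ℝ → ℝ) : ℝ :=
  (∫ x : ℝ, g x * heatP f t x ^ α) / (∫ x : ℝ, heatP f t x ^ α)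

/-- The Tsallis entropy along the heat flow, Shannon entropy at order 1. -/
noncomputable def tsallisEnt (f : ℝ → ℝ) (α t : ℝ) : ℝ :=
  if α = 1 then -∫ x : ℝ, heatP f t x * Real.log (heatP f t x)
  else (1 - α)⁻¹ * ((∫ x : ℝ, heatP f t x ^ α) - 1)

/-!
Write `G_j(s, ·)` for the `j`-th space derivative of the heat kernel at time `s`, so that
`p(·, t) = f ⋆ G_0(t)` and `p_k(·, t) = f ⋆ G_k(t)`. The semigroup identity
`G_0(s) ⋆ G_0(s) = G_0(2s)`, differentiated in space and integrated by parts, gives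
`G_j(s) ⋆ G_l(s) = G_{j+l}(2s)`. With the parity `G_k(-w) = (-1)^k G_k(w)` and Fubini this turns
the energy into a double integral against a single kernel:
`∫ p_k(x, t)² dx = (-1)^k R_{2k}(t)`, where `R_j(t) = ∬ f(y) f(z) G_j(2t)(z - y) dy dz`.
The heat equation `∂_s G_j = ½ G_{j+2}` gives `R_j' = R_{j+2}`, and `ĥ₂ = 1 - R_0`, hence
`∂_t^k ĥ₂ = -R_{2k} = (-1)^(k-1) ∫ p_k²`.
-/

open Polynomial
open ContinuousLinearMap (lsmul lsmul_apply)
open scoped Convolution Topology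

noncomputable section

namespace HeatFlow

theorem iteratedDeriv_eq_of_hasDerivAt {𝕜 E : Type*} [NontriviallyNormedField 𝕜]
    [NormedAddCommGroup E] [NormedSpace 𝕜 E] {U : Set 𝕜} (hU : IsOpen U) {F : ℕ → 𝕜 → E}
    (hF : ∀ n, ∀ x ∈ U, HasDerivAt (F n) (F (n + 1) x) x) (n : ℕ) {x : 𝕜} (hx : x ∈ U) :
    iteratedDeriv n (F 0) x = F n x := by
  induction n generalizing x with
  | zero => rfl
  | succ n ih =>
    have hev : iteratedDeriv n (F 0) =ᶠ[𝓝 x] F n :=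
      Filter.eventually_of_mem (hU.mem_nhds hx) fun y hy => ih hy
    rw [iteratedDeriv_succ, hev.deriv_eq, (hF n x hx).deriv]

theorem abs_le_integral_abs_of_hasDerivAt {h h' : ℝ → ℝ} (hd : ∀ x, HasDerivAt h (h' x) x)
    (hi : Integrable h) (hi' : Integrable h') (x : ℝ) : |h x| ≤ ∫ y, |h' y| := by
  have hlim : Tendsto h atBot (𝓝 0) :=
    tendsto_zero_of_hasDerivAt_of_integrableOn_Iic (a := x) (fun y _ => hd y)
      hi'.integrableOn hi.integrableOn
  have hFTC : ∫ y in Set.Iic x, h' y = h x - 0 :=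
    integral_Iic_of_hasDerivAt_of_tendsto' (fun y _ => hd y) hi'.integrableOn hlim
  calc |h x| = |∫ y in Set.Iic x, h' y| := by rw [hFTC, sub_zero]
    _ ≤ ∫ y in Set.Iic x, |h' y| := abs_integral_le_integral_abs
    _ ≤ ∫ y, |h' y| := setIntegral_le_integral hi'.abs (.of_forall fun y => abs_nonneg _)

theorem integrable_aeval_mul_exp_neg_mul_sq {R : Type*} [CommRing R] [Algebra R ℝ] (P : R[X])
    {b : ℝ} (hb : 0 < b) : Integrable fun x : ℝ => aeval x P * exp (-b * x ^ 2) := by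
  induction P using Polynomial.induction_on' with
  | add P Q hP hQ => simpa only [map_add, add_mul] using hP.fun_add hQ
  | monomial n a =>
    have h := integrable_rpow_mul_exp_neg_mul_sq hb (s := n) (by linarith [n.cast_nonneg (α := ℝ)])
    simpa only [aeval_monomial, Real.rpow_natCast, mul_assoc] using h.const_mul (algebraMap R ℝ a)

def gaussDeriv (j : ℕ) : ℝ → ℝ := deriv^[j] fun x => exp (-(x ^ 2 / 2))

theorem gaussDeriv_zero (x : ℝ) : gaussDeriv 0 x = exp (-(x ^ 2 / 2)) := rfl

theorem hasDerivAt_gaussDeriv (j : ℕ) (x : ℝ) :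
    HasDerivAt (gaussDeriv j) (gaussDeriv (j + 1) x) x := by
  have hsmooth : ContDiff ℝ (⊤ : ℕ∞) fun x : ℝ => exp (-(x ^ 2 / 2)) := by fun_prop
  rw [gaussDeriv, gaussDeriv, Function.iterate_succ_apply']
  exact ((hsmooth.iterate_deriv j).differentiable (by simp) x).hasDerivAt

theorem integrable_gaussDeriv (j : ℕ) : Integrable (gaussDeriv j) := by
  have h := (integrable_aeval_mul_exp_neg_mul_sq (hermite j) (b := 1 / 2) (by norm_num)).const_mul
    ((-1 : ℝ) ^ j)
  refine h.congr (.of_forall fun x => ?_)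
  rw [gaussDeriv, deriv_gaussian_eq_hermite_mul_gaussian]
  ring_nf

theorem abs_gaussDeriv_le (j : ℕ) (x : ℝ) : |gaussDeriv j x| ≤ ∫ y, |gaussDeriv (j + 1) y| :=
  abs_le_integral_abs_of_hasDerivAt (hasDerivAt_gaussDeriv j) (integrable_gaussDeriv j)
    (integrable_gaussDeriv (j + 1)) x

theorem gaussDeriv_one (x : ℝ) : gaussDeriv 1 x = -x * gaussDeriv 0 x := by
  rw [gaussDeriv, deriv_gaussian_eq_hermite_mul_gaussian, hermite_one, aeval_X, gaussDeriv_zero]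
  ring

/-- The three-term recurrence of the Hermite polynomials. -/
theorem gaussDeriv_add_two (j : ℕ) (x : ℝ) :
    gaussDeriv (j + 2) x = -x * gaussDeriv (j + 1) x - (j + 1) * gaussDeriv j x := by
  have hmul : ∀ m y, HasDerivAt (fun y => -y * gaussDeriv m y)
      (-gaussDeriv m y - y * gaussDeriv (m + 1) y) y := fun m y =>
    ((hasDerivAt_neg y).mul (hasDerivAt_gaussDeriv m y)).congr_deriv (by ring)
  induction j generalizing x with
  | zero =>
    have h1 : gaussDeriv 1 = fun y => -y * gaussDeriv 0 y := funext gaussDeriv_one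
    have hderiv := hasDerivAt_gaussDeriv 1 x
    rw [h1] at hderiv
    rw [show (0 : ℕ) + 2 = 1 + 1 from rfl, ← (hmul 0 x).unique hderiv]
    push_cast
    ring
  | succ j ih =>
    have h2 : gaussDeriv (j + 2) = fun y => -y * gaussDeriv (j + 1) y - (j + 1) * gaussDeriv j y :=
      funext ih
    have hderiv := hasDerivAt_gaussDeriv (j + 2) x
    rw [h2] at hderiv
    rw [show j + 1 + 2 = j + 2 + 1 from rfl,
      ← ((hmul (j + 1) x).sub ((hasDerivAt_gaussDeriv j x).const_mul ((j : ℝ) + 1))).unique hderiv]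
    push_cast
    ring

theorem gaussDeriv_neg (j : ℕ) (x : ℝ) : gaussDeriv j (-x) = (-1) ^ j * gaussDeriv j x := by
  induction j generalizing x with
  | zero => simp [gaussDeriv_zero]
  | succ j ih =>
    have hleft := (hasDerivAt_gaussDeriv j (-x)).comp x (hasDerivAt_neg x)
    rw [show gaussDeriv j ∘ Neg.neg = fun y => (-1) ^ j * gaussDeriv j y from funext ih] at hleft
    have hderiv := hleft.unique ((hasDerivAt_gaussDeriv j x).const_mul ((-1 : ℝ) ^ j))
    rw [pow_succ]
    linarith

section Convolution

variable {f g k k' : ℝ → ℝ}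

theorem convolution_eq_integral_mul (f g : ℝ → ℝ) (x : ℝ) :
    (f ⋆ g) x = ∫ t, f t * g (x - t) := rfl

theorem convolutionExistsAt_of_bounded (hf : Integrable f) (hk : Continuous k) {C : ℝ}
    (hkC : ∀ x, |k x| ≤ C) (x : ℝ) : ConvolutionExistsAt f k x (lsmul ℝ ℝ) :=
  hf.mul_bdd (hk.comp (continuous_const.sub continuous_id)).aestronglyMeasurable
    (.of_forall fun t => hkC (x - t))

theorem hasDerivAt_convolution_of_bounded (hf : Integrable f)
    (hk : ∀ x, HasDerivAt k (k' x) x) {C C' : ℝ} (hkC : ∀ x, |k x| ≤ C)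
    (hk'C : ∀ x, |k' x| ≤ C') (x₀ : ℝ) : HasDerivAt (f ⋆ k) ((f ⋆ k') x₀) x₀ := by
  have hkc : Continuous k := continuous_iff_continuousAt.2 fun x => (hk x).continuousAt
  have hk'm : Measurable k' := by
    rw [show k' = deriv k from funext fun x => (hk x).deriv.symm]
    exact measurable_deriv k
  refine (hasDerivAt_integral_of_dominated_loc_of_deriv_le (F := fun x t => f t * k (x - t))
    (F' := fun x t => f t * k' (x - t)) (bound := fun t => |f t| * C')
    Filter.univ_mem (.of_forall fun x => (convolutionExistsAt_of_bounded hf hkc hkC x).1)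
    (convolutionExistsAt_of_bounded hf hkc hkC x₀)
    (hf.1.mul (hk'm.comp (measurable_const.sub measurable_id)).aestronglyMeasurable)
    (.of_forall fun t x _ => ?_) (hf.abs.mul_const C') (.of_forall fun t x _ => ?_)).2
  · simpa only [smul_eq_mul, norm_mul, Real.norm_eq_abs, lsmul_apply] using
      mul_le_mul_of_nonneg_left (hk'C (x - t)) (abs_nonneg (f t))
  · exact (((hk (x - t)).comp x ((hasDerivAt_id' x).sub_const t)).const_mul (f t)).congr_deriv
      (by rw [mul_one])

theorem convolution_deriv_left_eq {f' g' : ℝ → ℝ} (hf : ∀ x, HasDerivAt f (f' x) x)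
    (hg : ∀ x, HasDerivAt g (g' x) x) {x : ℝ} (h₁ : ConvolutionExistsAt f' g x (lsmul ℝ ℝ))
    (h₂ : ConvolutionExistsAt f g' x (lsmul ℝ ℝ)) (h₃ : ConvolutionExistsAt f g x (lsmul ℝ ℝ)) :
    (f' ⋆ g) x = (f ⋆ g') x := by
  have hIBP := integral_mul_deriv_eq_deriv_mul_of_integrable (u := f) (u' := f')
    (v := fun t => g (x - t)) (v' := fun t => -g' (x - t)) (fun t _ => hf t)
    (fun t _ => ((hg (x - t)).comp t ((hasDerivAt_id' t).const_sub x)).congr_deriv (mul_neg_one _))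
    (h₂.neg.congr (.of_forall fun t => by simp)) h₁ h₃
  simp only [convolution_eq_integral_mul, mul_neg, integral_neg, neg_inj] at hIBP ⊢
  exact hIBP.symm

theorem integrable_convolution_sq_integrand (hf : Integrable f) (hg : Integrable g)
    (hgc : Continuous g) {C : ℝ} (hgC : ∀ x, |g x| ≤ C) :
    Integrable (fun q : ℝ × (ℝ × ℝ) => f q.2.1 * g (q.1 - q.2.1) * (f q.2.2 * g (q.1 - q.2.2)))
      (volume.prod (volume.prod volume)) := by
  have hFm : AEStronglyMeasurable
      (fun q : ℝ × (ℝ × ℝ) => f q.2.1 * g (q.1 - q.2.1) * (f q.2.2 * g (q.1 - q.2.2)))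
      (volume.prod (volume.prod volume)) :=
    (hf.1.comp_fst.comp_snd.mul (hgc.comp (continuous_fst.sub
      (continuous_fst.comp continuous_snd))).aestronglyMeasurable).mul
      (hf.1.comp_snd.comp_snd.mul (hgc.comp (continuous_fst.sub
      (continuous_snd.comp continuous_snd))).aestronglyMeasurable)
  refine (integrable_prod_iff' hFm).2 ⟨.of_forall fun p => ?_, ?_⟩
  · have hgm : AEStronglyMeasurable (fun x => g (x - p.2)) volume :=
      (hgc.comp (continuous_sub_right p.2)).aestronglyMeasurable
    refine (((hg.comp_sub_right p.1).mul_bdd hgm (.of_forall fun x => hgC (x - p.2))).const_mul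
      (f p.1 * f p.2)).congr (.of_forall fun x => ?_)
    ring
  · refine ((hf.norm.mul_prod hf.norm).mul_const (C * ∫ x, |g x|)).mono'
      hFm.norm.prod_swap.integral_prod_right' (.of_forall fun p => ?_)
    rw [Real.norm_of_nonneg (integral_nonneg fun x => norm_nonneg _)]
    calc ∫ x, ‖f p.1 * g (x - p.1) * (f p.2 * g (x - p.2))‖
        ≤ ∫ x, ‖f p.1‖ * ‖f p.2‖ * C * |g (x - p.1)| := by
          refine integral_mono_of_nonneg (.of_forall fun x => norm_nonneg _)
            (((hg.comp_sub_right p.1).abs).const_mul _) (.of_forall fun x => ?_)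
          simp only [norm_mul, Real.norm_eq_abs]
          have := hgC (x - p.2)
          have h0 : 0 ≤ |f p.1| * |f p.2| * |g (x - p.1)| := by positivity
          nlinarith
      _ = ‖f p.1‖ * ‖f p.2‖ * (C * ∫ x, |g x|) := by
          rw [integral_const_mul, integral_sub_right_eq_self (fun x => |g x|) p.1]
          ring

theorem integral_sq_convolution (hf : Integrable f) (hg : Integrable g) (hgc : Continuous g)
    {C : ℝ} (hgC : ∀ x, |g x| ≤ C) :
    ∫ x, (f ⋆ g) x ^ 2 = ∫ p : ℝ × ℝ, f p.1 * f p.2 * (g ⋆ fun u => g (-u)) (p.2 - p.1) := by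
  calc ∫ x, (f ⋆ g) x ^ 2
      = ∫ x, ∫ p : ℝ × ℝ, f p.1 * g (x - p.1) * (f p.2 * g (x - p.2)) := by
        refine integral_congr_ae (.of_forall fun x => ?_)
        simp only [sq, convolution_eq_integral_mul]
        exact (integral_prod_mul (fun y => f y * g (x - y)) (fun z => f z * g (x - z))).symm
    _ = ∫ p : ℝ × ℝ, ∫ x, f p.1 * g (x - p.1) * (f p.2 * g (x - p.2)) :=
        integral_integral_swap (integrable_convolution_sq_integrand hf hg hgc hgC)
    _ = ∫ p : ℝ × ℝ, f p.1 * f p.2 * (g ⋆ fun u => g (-u)) (p.2 - p.1) := by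
        congr 1 with p
        rw [convolution_eq_integral_mul, ← integral_const_mul]
        conv_lhs => rw [← integral_add_right_eq_self _ p.1]
        congr 1 with x
        ring_nf

end Convolution

/-- `∂_w^j` of the heat kernel `(2πs)^{-1/2} e^{-w²/(2s)}`, obtained from `gaussDeriv j` by
parabolic scaling. -/
def heatKernelDeriv (j : ℕ) (s w : ℝ) : ℝ :=
  (√(2 * π))⁻¹ * (√s)⁻¹ ^ (j + 1) * gaussDeriv j (w * (√s)⁻¹)

theorem heatKernelDeriv_zero_apply {s : ℝ} (hs : 0 < s) (w : ℝ) :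
    heatKernelDeriv 0 s w = (√(2 * π * s))⁻¹ * exp (-w ^ 2 / (2 * s)) := by
  rw [heatKernelDeriv, gaussDeriv_zero, pow_one, ← mul_inv, ← Real.sqrt_mul (by positivity),
    mul_pow, inv_pow, Real.sq_sqrt hs.le]
  congr 2
  ring

theorem hasDerivAt_heatKernelDeriv (j : ℕ) (s w : ℝ) :
    HasDerivAt (heatKernelDeriv j s) (heatKernelDeriv (j + 1) s w) w := by
  have h := (hasDerivAt_gaussDeriv j (w * (√s)⁻¹)).comp w ((hasDerivAt_id' w).mul_const (√s)⁻¹)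
  exact (h.const_mul ((√(2 * π))⁻¹ * (√s)⁻¹ ^ (j + 1))).congr_deriv (by
    rw [heatKernelDeriv]; ring)

theorem continuous_heatKernelDeriv (j : ℕ) (s : ℝ) : Continuous (heatKernelDeriv j s) :=
  continuous_iff_continuousAt.2 fun w => (hasDerivAt_heatKernelDeriv j s w).continuousAt

theorem integrable_heatKernelDeriv (j : ℕ) {s : ℝ} (hs : 0 < s) :
    Integrable (heatKernelDeriv j s) :=
  ((integrable_gaussDeriv j).comp_mul_right' (by positivity)).const_mul _

theorem exists_abs_heatKernelDeriv_le (j : ℕ) {a : ℝ} (ha : 0 < a) :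
    ∃ C, ∀ s, a ≤ s → ∀ w, |heatKernelDeriv j s w| ≤ C := by
  refine ⟨(√(2 * π))⁻¹ * (√a)⁻¹ ^ (j + 1) * ∫ y, |gaussDeriv (j + 1) y|, fun s has w => ?_⟩
  have hτ : (√s)⁻¹ ≤ (√a)⁻¹ := inv_anti₀ (Real.sqrt_pos.2 ha) (Real.sqrt_le_sqrt has)
  rw [heatKernelDeriv, abs_mul, abs_mul, abs_of_nonneg (by positivity),
    abs_of_nonneg (by positivity)]
  gcongr
  exact abs_gaussDeriv_le j _

theorem heatKernelDeriv_neg (j : ℕ) (s w : ℝ) :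
    heatKernelDeriv j s (-w) = (-1) ^ j * heatKernelDeriv j s w := by
  rw [heatKernelDeriv, heatKernelDeriv, neg_mul, gaussDeriv_neg]
  ring

theorem hasDerivAt_inv_sqrt {s : ℝ} (hs : 0 < s) :
    HasDerivAt (fun s => (√s)⁻¹) (-(√s)⁻¹ ^ 3 / 2) s := by
  have hσ : √s ≠ 0 := (Real.sqrt_pos.2 hs).ne'
  refine ((Real.hasDerivAt_sqrt hs.ne').inv hσ).congr_deriv ?_
  field_simp

theorem hasDerivAt_heatKernelDeriv_time (j : ℕ) (w : ℝ) {s : ℝ} (hs : 0 < s) :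
    HasDerivAt (fun s => heatKernelDeriv j s w) (heatKernelDeriv (j + 2) s w / 2) s := by
  have hτ := hasDerivAt_inv_sqrt hs
  have h := ((hτ.fun_pow (j + 1)).const_mul (√(2 * π))⁻¹).mul
    ((hasDerivAt_gaussDeriv j (w * (√s)⁻¹)).comp s (hτ.const_mul w))
  refine h.congr_deriv ?_
  simp only [Function.comp_apply, Nat.add_sub_cancel]
  rw [heatKernelDeriv, gaussDeriv_add_two]
  push_cast
  ring

theorem convolutionExistsAt_heatKernelDeriv (j l : ℕ) {s : ℝ} (hs : 0 < s) (w : ℝ) :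
    ConvolutionExistsAt (heatKernelDeriv j s) (heatKernelDeriv l s) w (lsmul ℝ ℝ) :=
  let ⟨_, hC⟩ := exists_abs_heatKernelDeriv_le l hs
  convolutionExistsAt_of_bounded (integrable_heatKernelDeriv j hs)
    (continuous_heatKernelDeriv l s) (hC s le_rfl) w

theorem heatKernel_convolution_heatKernel {s : ℝ} (hs : 0 < s) :
    heatKernelDeriv 0 s ⋆ heatKernelDeriv 0 s = heatKernelDeriv 0 (2 * s) := by
  funext w
  -- completing the square in `u`
  have hsplit : ∀ u, heatKernelDeriv 0 s u * heatKernelDeriv 0 s (w - u) =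
      (2 * π * s)⁻¹ * exp (-w ^ 2 / (2 * (2 * s))) * exp (-s⁻¹ * (u - w / 2) ^ 2) := fun u => by
    rw [heatKernelDeriv_zero_apply hs, heatKernelDeriv_zero_apply hs, mul_mul_mul_comm,
      ← exp_add, mul_assoc (2 * π * s)⁻¹, ← exp_add, ← mul_inv, Real.mul_self_sqrt (by positivity)]
    congr 2
    field_simp
    ring
  have hroot : √(2 * π * (2 * s)) = 2 * √(π / s⁻¹) := by
    rw [div_inv_eq_mul, show 2 * π * (2 * s) = 2 ^ 2 * (π * s) by ring,
      Real.sqrt_mul (by norm_num), Real.sqrt_sq (by norm_num)]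
  rw [convolution_eq_integral_mul, integral_congr_ae (.of_forall hsplit), integral_const_mul,
    integral_sub_right_eq_self (fun u => exp (-s⁻¹ * u ^ 2)) (w / 2), integral_gaussian,
    heatKernelDeriv_zero_apply (by positivity), hroot]
  have : 0 < √(π / s⁻¹) := Real.sqrt_pos.2 (by positivity)
  field_simp
  exact Real.sq_sqrt (by positivity)

theorem hasDerivAt_convolution_heatKernelDeriv {g : ℝ → ℝ} (hg : Integrable g) (j : ℕ) {s : ℝ}
    (hs : 0 < s) (w : ℝ) :
    HasDerivAt (g ⋆ heatKernelDeriv j s) ((g ⋆ heatKernelDeriv (j + 1) s) w) w :=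
  let ⟨_, hC⟩ := exists_abs_heatKernelDeriv_le j hs
  let ⟨_, hC'⟩ := exists_abs_heatKernelDeriv_le (j + 1) hs
  hasDerivAt_convolution_of_bounded hg (hasDerivAt_heatKernelDeriv j s) (hC s le_rfl)
    (hC' s le_rfl) w

theorem heatKernel_convolution_heatKernelDeriv {s : ℝ} (hs : 0 < s) (l : ℕ) :
    heatKernelDeriv 0 s ⋆ heatKernelDeriv l s = heatKernelDeriv l (2 * s) := by
  induction l with
  | zero => exact heatKernel_convolution_heatKernel hs
  | succ l ih =>
    funext w
    have h := hasDerivAt_convolution_heatKernelDeriv (integrable_heatKernelDeriv 0 hs) l hs w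
    rw [ih] at h
    exact h.unique (hasDerivAt_heatKernelDeriv l (2 * s) w)

/-- Integrating by parts moves derivatives between the factors, so only the total order matters. -/
theorem heatKernelDeriv_convolution {s : ℝ} (hs : 0 < s) (j l : ℕ) :
    heatKernelDeriv j s ⋆ heatKernelDeriv l s = heatKernelDeriv (j + l) (2 * s) := by
  induction j generalizing l with
  | zero => rw [zero_add]; exact heatKernel_convolution_heatKernelDeriv hs l
  | succ j ih =>
    funext w
    rw [convolution_deriv_left_eq (hasDerivAt_heatKernelDeriv j s) (hasDerivAt_heatKernelDeriv l s)
      (convolutionExistsAt_heatKernelDeriv _ _ hs w) (convolutionExistsAt_heatKernelDeriv _ _ hs w)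
      (convolutionExistsAt_heatKernelDeriv _ _ hs w), ih (l + 1), Nat.add_right_comm,
      Nat.add_assoc]

variable {f : ℝ → ℝ}

theorem heatP_eq_convolution {t : ℝ} (ht : 0 < t) : heatP f t = f ⋆ heatKernelDeriv 0 t := by
  funext x
  simp only [heatP, convolution_eq_integral_mul, heatKernelDeriv_zero_apply ht]

theorem pk_eq_convolution (hf : Integrable f) (k : ℕ) {t : ℝ} (ht : 0 < t) :
    pk f k t = f ⋆ heatKernelDeriv k t := by
  funext x
  rw [pk, heatP_eq_convolution ht]
  exact iteratedDeriv_eq_of_hasDerivAt isOpen_univ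
    (fun n x _ => hasDerivAt_convolution_heatKernelDeriv hf n ht x) k (Set.mem_univ x)

/-- The kernel `R_j(s)` of the header; `R_{2k}(t) = (-1)^k ∫ p_k(x, t)² dx`. -/
def heatPairing (f : ℝ → ℝ) (j : ℕ) (s : ℝ) : ℝ :=
  ∫ p : ℝ × ℝ, f p.1 * f p.2 * heatKernelDeriv j (2 * s) (p.2 - p.1)

theorem integral_sq_convolution_heatKernelDeriv (hf : Integrable f) (k : ℕ) {t : ℝ} (ht : 0 < t) :
    ∫ x, (f ⋆ heatKernelDeriv k t) x ^ 2 = (-1) ^ k * heatPairing f (2 * k) t := by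
  obtain ⟨C, hC⟩ := exists_abs_heatKernelDeriv_le k ht
  have hreflect : (heatKernelDeriv k t ⋆ fun u => heatKernelDeriv k t (-u)) =
      (-1 : ℝ) ^ k • heatKernelDeriv (2 * k) (2 * t) := by
    simp_rw [heatKernelDeriv_neg]
    rw [show (fun u => (-1 : ℝ) ^ k * heatKernelDeriv k t u) = (-1 : ℝ) ^ k • heatKernelDeriv k t
      from rfl, convolution_smul, heatKernelDeriv_convolution ht, ← two_mul]
  rw [integral_sq_convolution hf (integrable_heatKernelDeriv k ht) (continuous_heatKernelDeriv k t)
    (hC t le_rfl), hreflect, heatPairing, ← integral_const_mul]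
  congr 1 with p
  simp only [Pi.smul_apply, smul_eq_mul]
  ring

theorem hasDerivAt_heatPairing (hf : Integrable f) (j : ℕ) {t : ℝ} (ht : 0 < t) :
    HasDerivAt (heatPairing f j) (heatPairing f (j + 2) t) t := by
  obtain ⟨C₀, hC₀⟩ := exists_abs_heatKernelDeriv_le j (by positivity : 0 < 2 * t)
  obtain ⟨C, hC⟩ := exists_abs_heatKernelDeriv_le (j + 2) ht
  have hmeas : ∀ i s, AEStronglyMeasurable
      (fun p : ℝ × ℝ => f p.1 * f p.2 * heatKernelDeriv i (2 * s) (p.2 - p.1)) volume :=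
    fun i s => (hf.1.comp_fst.mul hf.1.comp_snd).mul
      ((continuous_heatKernelDeriv i _).comp (continuous_snd.sub continuous_fst)).aestronglyMeasurable
  have hball : ∀ s ∈ Metric.ball t (t / 2), 0 < s ∧ t ≤ 2 * s := fun s hs => by
    rw [Metric.mem_ball, Real.dist_eq, abs_sub_lt_iff] at hs
    constructor <;> linarith
  refine (hasDerivAt_integral_of_dominated_loc_of_deriv_le
    (F' := fun s p => f p.1 * f p.2 * heatKernelDeriv (j + 2) (2 * s) (p.2 - p.1))
    (bound := fun p => |f p.1| * |f p.2| * C) (Metric.ball_mem_nhds t (half_pos ht))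
    (.of_forall (hmeas j)) ((hf.mul_prod hf).mul_bdd ?_ (.of_forall fun p => hC₀ _ le_rfl _))
    (hmeas (j + 2) t) (.of_forall fun p s hs => ?_) ((hf.abs.mul_prod hf.abs).mul_const C)
    (.of_forall fun p s hs => ?_)).2
  · exact ((continuous_heatKernelDeriv j _).comp
      (continuous_snd.sub continuous_fst)).aestronglyMeasurable
  · rw [norm_mul, norm_mul, Real.norm_eq_abs, Real.norm_eq_abs]
    exact mul_le_mul_of_nonneg_left (hC _ (hball s hs).2 _) (by positivity)
  · have hs : 0 < 2 * s := by linarith [(hball s hs).1]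
    exact (((hasDerivAt_heatKernelDeriv_time j _ hs).comp s
      ((hasDerivAt_id' s).const_mul 2)).const_mul (f p.1 * f p.2)).congr_deriv (by ring)

theorem tsallisEnt_two_eq (hf : Integrable f) {t : ℝ} (ht : 0 < t) :
    tsallisEnt f 2 t = 1 - heatPairing f 0 t := by
  have h := integral_sq_convolution_heatKernelDeriv hf 0 ht
  rw [← heatP_eq_convolution ht, pow_zero, one_mul, mul_zero] at h
  rw [tsallisEnt, if_neg (by norm_num)]
  simp only [Real.rpow_two, h]
  norm_num

theorem iteratedDeriv_tsallisEnt_two (hf : Integrable f) {k : ℕ} (hk : 1 ≤ k) {t : ℝ}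
    (ht : 0 < t) :
    iteratedDeriv k (fun s => tsallisEnt f 2 s) t = (-1) ^ (k - 1) * ∫ x, pk f k t x ^ 2 := by
  have hev : (fun s => tsallisEnt f 2 s) =ᶠ[𝓝 t] fun s => 1 + -heatPairing f (2 * 0) s :=
    eventually_of_mem (Ioi_mem_nhds ht) fun s hs => by
      simp only [tsallisEnt_two_eq hf hs, mul_zero, sub_eq_add_neg]
  have hchain := iteratedDeriv_eq_of_hasDerivAt isOpen_Ioi
    (F := fun n s => -heatPairing f (2 * n) s)
    (fun n s hs => (hasDerivAt_heatPairing hf (2 * n) hs).neg) k ht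
  rw [hev.iteratedDeriv_eq, iteratedDeriv_const_add (by omega), hchain, pk_eq_convolution hf k ht,
    integral_sq_convolution_heatKernelDeriv hf k ht]
  obtain ⟨m, rfl⟩ : ∃ m, k = m + 1 := ⟨k - 1, by omega⟩
  simp [pow_succ, ← mul_assoc, ← pow_add, ← two_mul, pow_mul]

end HeatFlow

end

theorem tsallis_two_completely_monotone_general
    (f : ℝ → ℝ) (hf1 : (∫ x : ℝ, f x) = 1) :
    ∀ k : ℕ, 1 ≤ k → ∀ t : ℝ, 0 < t →
      iteratedDeriv k (fun s => tsallisEnt f 2 s) t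
          = (-1 : ℝ) ^ (k - 1) * (∫ x : ℝ, (pk f k t x) ^ 2)
      ∧ 0 ≤ (-1 : ℝ) ^ (k - 1) * iteratedDeriv k (fun s => tsallisEnt f 2 s) t := by
  intro k hk t ht
  have hf : Integrable f := .of_integral_ne_zero (by rw [hf1]; exact one_ne_zero)
  have hderiv := HeatFlow.iteratedDeriv_tsallisEnt_two hf hk ht
  refine ⟨hderiv, ?_⟩
  rw [hderiv, ← mul_assoc, ← mul_pow, neg_one_mul, neg_neg, one_pow, one_mul]
  exact integral_nonneg fun x => sq_nonneg _

/-- Complete monotonicity of the Tsallis entropy of order 2 along the heat flow: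
for every k ≥ 1 the k-th time-derivative equals (-1)^(k-1) ∫ p_k², which is of sign
(-1)^(k-1). -/
theorem tsallis_two_completely_monotone
    (f : ℝ → ℝ) (hfm : Measurable f) (hf0 : ∀ x, 0 ≤ f x)
    (hf1 : (∫ x : ℝ, f x) = 1) :
    ∀ k : ℕ, 1 ≤ k → ∀ t : ℝ, 0 < t →
      iteratedDeriv k (fun s => tsallisEnt f 2 s) t
          = (-1 : ℝ) ^ (k - 1) * (∫ x : ℝ, (pk f k t x) ^ 2)
      ∧ 0 ≤ (-1 : ℝ) ^ (k - 1) * iteratedDeriv k (fun s => tsallisEnt f 2 s) t :=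
  tsallis_two_completely_monotone_general f hf1
end

section
/- Let α ∈ (0,∞), let r be a positive integer, let n₁,…,n_r and k₁,…,k_r be positive integers, let 0 < a < b < ∞ and ε > 0. Then there exists a constant C (depending only on α, a, b, ε and (n_i, k_i)_{i=1}^r) such that for all t ∈ [a,b] and all x ∈ ℝ, p(x,t)^α · ∏_{i=1}^r |p^{(n_i)}(x,t)/p(x,t)|^{k_i} ≤ C · p(x, b+ε)^α. In particular, for each t ∈ [a,b], p(x,t)^α · ∏_{i=1}^r (p^{(n_i)}(x,t)/p(x,t))^{k_i} → 0 as |x| → ∞. -/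
/-!
Differentiating under the integral, `∂ₓⁿ p(·,t) = f ⋆ (H_{n,t} g_t)` where `g_t` is the heat
kernel and `H_{n,t}` a polynomial whose coefficients are bounded uniformly for `t ∈ [a,b]`.
For `b < s` the Gaussian `g_t` decays faster than `g_s`, so it absorbs the polynomial even after
trading a factor `g_t^θ` for `g_s^θ`: `|H_{n,t} g_t| ≤ C g_s^θ g_t^(1-θ)`. Hölder's inequality
turns this into `|∂ₓⁿ p(·,t)| ≤ C p(·,s)^θ p(·,t)^(1-θ)`, i.e. `|∂ₓⁿ p / p| ≤ C (p(·,s)/p(·,t))^θ`.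
Choosing `θ` with `θ ∑ kᵢ ≤ α` and using `p(·,t) ≤ √(s/a) p(·,s)` bounds the whole product by
`C p(·,s)^α`, which tends to `0` at infinity by dominated convergence.
-/

open MeasureTheory Real Filter
open scoped Classical

open Topology

theorem integrable_rpow_mul_rpow {α : Type*} [MeasurableSpace α] {μ : Measure α}
    {F G : α → ℝ} (hF0 : 0 ≤ F) (hG0 : 0 ≤ G) (hF : Integrable F μ) (hG : Integrable G μ)
    {p q : ℝ} (hp : 0 ≤ p) (hq : 0 ≤ q) (hpq : p + q = 1) :
    Integrable (fun a => F a ^ p * G a ^ q) μ := by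
  refine ((hF.const_mul p).add (hG.const_mul q)).mono'
    ((hF.aemeasurable.pow_const p).mul (hG.aemeasurable.pow_const q)).aestronglyMeasurable
    (Eventually.of_forall fun a => ?_)
  rw [Real.norm_of_nonneg (mul_nonneg (rpow_nonneg (hF0 a) p) (rpow_nonneg (hG0 a) q))]
  exact geom_mean_le_arith_mean2_weighted hp hq (hF0 a) (hG0 a) hpq

theorem integral_rpow_mul_rpow_le {α : Type*} [MeasurableSpace α] {μ : Measure α}
    {F G : α → ℝ} (hF0 : 0 ≤ F) (hG0 : 0 ≤ G) (hF : Integrable F μ) (hG : Integrable G μ)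
    {p q : ℝ} (hp : 0 ≤ p) (hq : 0 ≤ q) (hpq : p + q = 1) :
    ∫ a, F a ^ p * G a ^ q ∂μ ≤ (∫ a, F a ∂μ) ^ p * (∫ a, G a ∂μ) ^ q := by
  have hHolder := ENNReal.lintegral_mul_norm_pow_le hF.aemeasurable.ennreal_ofReal
    hG.aemeasurable.ennreal_ofReal hp hq hpq
  rw [integral_eq_lintegral_of_nonneg_ae (f := fun a => F a ^ p * G a ^ q)
      (Eventually.of_forall fun a => mul_nonneg (rpow_nonneg (hF0 a) p) (rpow_nonneg (hG0 a) q))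
      ((hF.aemeasurable.pow_const p).mul (hG.aemeasurable.pow_const q)).aestronglyMeasurable,
    integral_eq_lintegral_of_nonneg_ae (Eventually.of_forall hF0) hF.1,
    integral_eq_lintegral_of_nonneg_ae (Eventually.of_forall hG0) hG.1,
    ENNReal.toReal_rpow, ENNReal.toReal_rpow, ← ENNReal.toReal_mul]
  refine ENNReal.toReal_mono ?_ (le_of_eq_of_le (lintegral_congr fun a => ?_) hHolder)
  · exact ENNReal.mul_ne_top (ENNReal.rpow_ne_top_of_nonneg hp hF.lintegral_lt_top.ne)
      (ENNReal.rpow_ne_top_of_nonneg hq hG.lintegral_lt_top.ne)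
  · rw [ENNReal.ofReal_mul (rpow_nonneg (hF0 a) p), ENNReal.ofReal_rpow_of_nonneg (hF0 a) hp,
      ENNReal.ofReal_rpow_of_nonneg (hG0 a) hq]

lemma rpow_mul_div_rpow_le {P Q c α β : ℝ} (hP : 0 < P) (hQ : 0 < Q) (hPQ : P ≤ c * Q)
    (hβα : β ≤ α) : P ^ α * (Q / P) ^ β ≤ c ^ (α - β) * Q ^ α := by
  have hc : 0 ≤ c := nonneg_of_mul_nonneg_left (hP.le.trans hPQ) hQ
  calc P ^ α * (Q / P) ^ β = P ^ (α - β) * Q ^ β := by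
        rw [div_rpow hQ.le hP.le, rpow_sub hP]
        field_simp
    _ ≤ (c * Q) ^ (α - β) * Q ^ β := by gcongr
    _ = c ^ (α - β) * Q ^ α := by
        rw [mul_rpow hc hQ.le, mul_assoc, ← rpow_add hQ, sub_add_cancel]

lemma mul_rpow_mul_rpow_eq {c u v θ : ℝ} (hc : 0 ≤ c) (hu : 0 ≤ u) (hv : 0 ≤ v) :
    c * (u ^ θ * v ^ (1 - θ)) = (c * u) ^ θ * (c * v) ^ (1 - θ) := by
  rw [mul_rpow hc hu, mul_rpow hc hv, mul_mul_mul_comm, ← rpow_add' hc (by simp), add_sub_cancel,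
    rpow_one]

section PolynomialBounds

open Polynomial

lemma abs_coeff_derivative_le {p : ℝ[X]} {n : ℕ} {B : ℝ} (hp : p.natDegree ≤ n)
    (hB : ∀ i, |p.coeff i| ≤ B) (i : ℕ) : |(derivative p).coeff i| ≤ n * B := by
  rw [coeff_derivative]
  rcases le_or_gt (i + 1) n with hi | hi
  · have hi' : |(i : ℝ) + 1| ≤ n := by rw [abs_of_nonneg (by positivity)]; exact_mod_cast hi
    rw [abs_mul, mul_comm]
    exact mul_le_mul hi' (hB _) (abs_nonneg _) n.cast_nonneg
  · rw [coeff_eq_zero_of_natDegree_lt (hp.trans_lt hi), zero_mul, abs_zero]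
    exact mul_nonneg n.cast_nonneg ((abs_nonneg _).trans (hB 0))

lemma abs_coeff_X_mul_le {p : ℝ[X]} {B : ℝ} (hB : ∀ i, |p.coeff i| ≤ B) (i : ℕ) :
    |(X * p).coeff i| ≤ B := by
  cases i with
  | zero => simpa using (abs_nonneg _).trans (hB 0)
  | succ i => rw [coeff_X_mul]; exact hB i

lemma abs_eval_le_of_abs_coeff_le {p : ℝ[X]} {n : ℕ} {B : ℝ} (hp : p.natDegree ≤ n)
    (hB : ∀ i, |p.coeff i| ≤ B) (z : ℝ) :
    |p.eval z| ≤ (n + 1) * B * (1 + |z|) ^ n := by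
  rw [eval_eq_sum_range' (Nat.lt_succ_of_le hp)]
  calc |∑ i ∈ Finset.range (n + 1), p.coeff i * z ^ i|
      ≤ ∑ i ∈ Finset.range (n + 1), |p.coeff i * z ^ i| := Finset.abs_sum_le_sum_abs _ _
    _ ≤ ∑ _i ∈ Finset.range (n + 1), B * (1 + |z|) ^ n := by
        refine Finset.sum_le_sum fun i hi => ?_
        rw [abs_mul, abs_pow]
        gcongr
        · exact (abs_nonneg _).trans (hB 0)
        · exact hB i
        · calc |z| ^ i ≤ (1 + |z|) ^ i := by gcongr; linarith
            _ ≤ (1 + |z|) ^ n :=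
              pow_le_pow_right₀ (by simp) (Nat.lt_succ_iff.1 (Finset.mem_range.1 hi))
    _ = (n + 1) * B * (1 + |z|) ^ n := by
        rw [Finset.sum_const, Finset.card_range, nsmul_eq_mul]; push_cast; ring

end PolynomialBounds

lemma one_add_abs_pow_le_exp (n : ℕ) {η : ℝ} (hη : 0 < η) (z : ℝ) :
    (1 + |z|) ^ n ≤ exp (n ^ 2 / (4 * η)) * exp (η * z ^ 2) := by
  calc (1 + |z|) ^ n ≤ exp |z| ^ n := by gcongr; linarith [add_one_le_exp |z|]
    _ = exp (n * |z|) := (exp_nat_mul _ _).symm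
    _ ≤ exp (n ^ 2 / (4 * η) + η * z ^ 2) := by
        gcongr
        -- AM-GM: `n |z| ≤ n² / (4η) + η z²`
        rw [← sq_abs z, div_add' _ _ _ (by positivity), le_div_iff₀ (by positivity)]
        nlinarith [sq_nonneg (2 * η * |z| - n)]
    _ = exp (n ^ 2 / (4 * η)) * exp (η * z ^ 2) := exp_add _ _

noncomputable def heatKernel (t z : ℝ) : ℝ :=
  (√(2 * π * t))⁻¹ * exp (-z ^ 2 / (2 * t))

section HeatKernel

variable {s t : ℝ}

lemma heatKernel_pos (ht : 0 < t) (z : ℝ) : 0 < heatKernel t z := by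
  unfold heatKernel; positivity

@[fun_prop]
lemma continuous_heatKernel (t : ℝ) : Continuous (heatKernel t) := by
  unfold heatKernel; fun_prop

lemma exp_mul_heatKernel_le {η : ℝ} (ht : 0 < t) (hη : η ≤ (2 * t)⁻¹) (z : ℝ) :
    exp (η * z ^ 2) * heatKernel t z ≤ (√(2 * π * t))⁻¹ := by
  have hexp : η * z ^ 2 + -z ^ 2 / (2 * t) ≤ 0 := by
    rw [neg_div, div_eq_mul_inv]
    nlinarith [sq_nonneg z]
  calc exp (η * z ^ 2) * heatKernel t z
        = (√(2 * π * t))⁻¹ * exp (η * z ^ 2 + -z ^ 2 / (2 * t)) := by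
        rw [heatKernel, exp_add]; ring
    _ ≤ (√(2 * π * t))⁻¹ * 1 := by gcongr; exact exp_le_one_iff.2 hexp
    _ = _ := mul_one _

lemma heatKernel_le (ht : 0 < t) (z : ℝ) : heatKernel t z ≤ (√(2 * π * t))⁻¹ := by
  simpa using exp_mul_heatKernel_le ht (inv_nonneg.2 (by positivity)) z

lemma heatKernel_mul_exp (ht : 0 < t) (hs : 0 < s) (z : ℝ) :
    heatKernel t z * exp (((2 * t)⁻¹ - (2 * s)⁻¹) * z ^ 2) = √(s / t) * heatKernel s z := by
  have h2π : 0 < 2 * π := by positivity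
  rw [heatKernel, heatKernel, sqrt_div' _ ht.le, sqrt_mul h2π.le, sqrt_mul h2π.le]
  have : 0 < √t := sqrt_pos.2 ht
  have : 0 < √(2 * π) := sqrt_pos.2 h2π
  rw [mul_assoc, ← exp_add]
  field_simp
  congr 1
  field_simp
  ring

lemma heatKernel_le_sqrt_mul_heatKernel (ht : 0 < t) (hts : t ≤ s) (z : ℝ) :
    heatKernel t z ≤ √(s / t) * heatKernel s z := by
  rw [← heatKernel_mul_exp ht (ht.trans_le hts)]
  refine le_mul_of_one_le_right (heatKernel_pos ht z).le (one_le_exp ?_)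
  have : (2 * s)⁻¹ ≤ (2 * t)⁻¹ := by gcongr
  nlinarith [sq_nonneg z]

lemma tendsto_heatKernel_cocompact (ht : 0 < t) :
    Tendsto (heatKernel t) (cocompact ℝ) (𝓝 0) := by
  have hsq : Tendsto (fun z : ℝ => z ^ 2) (cocompact ℝ) atTop :=
    ((tendsto_pow_atTop two_ne_zero).comp tendsto_norm_cocompact_atTop).congr
      fun z => by simp [sq_abs]
  have hexp := tendsto_exp_atBot.comp
    ((tendsto_neg_atTop_atBot.comp hsq).atBot_div_const (by positivity : 0 < 2 * t))
  have := hexp.const_mul (√(2 * π * t))⁻¹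
  rwa [mul_zero] at this

lemma exp_mul_heatKernel_le_rpow_mul_rpow {a b θ : ℝ} (ha : 0 < a) (hat : a ≤ t)
    (htb : t ≤ b) (hs : 0 < s) (hθ : 0 ≤ θ) (z : ℝ) :
    exp (θ * ((2 * b)⁻¹ - (2 * s)⁻¹) * z ^ 2) * heatKernel t z
      ≤ √(s / a) ^ θ * (heatKernel s z ^ θ * heatKernel t z ^ (1 - θ)) := by
  have ht : 0 < t := ha.trans_le hat
  have hK := heatKernel_pos ht z
  calc exp (θ * ((2 * b)⁻¹ - (2 * s)⁻¹) * z ^ 2) * heatKernel t z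
      ≤ exp (θ * ((2 * t)⁻¹ - (2 * s)⁻¹) * z ^ 2) * heatKernel t z := by gcongr
    _ = (heatKernel t z * exp (((2 * t)⁻¹ - (2 * s)⁻¹) * z ^ 2)) ^ θ
          * heatKernel t z ^ (1 - θ) := by
        have hsplit : heatKernel t z = heatKernel t z ^ θ * heatKernel t z ^ (1 - θ) := by
          rw [← rpow_add hK, add_sub_cancel, rpow_one]
        rw [mul_rpow hK.le (exp_pos _).le, ← exp_mul]
        nth_rewrite 1 [hsplit]
        ring_nf
    _ = √(s / t) ^ θ * (heatKernel s z ^ θ * heatKernel t z ^ (1 - θ)) := by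
        rw [heatKernel_mul_exp ht hs, mul_rpow (sqrt_nonneg _) (heatKernel_pos hs z).le,
          mul_assoc]
    _ ≤ √(s / a) ^ θ * (heatKernel s z ^ θ * heatKernel t z ^ (1 - θ)) := by
        have := heatKernel_pos hs z
        gcongr

end HeatKernel

section HeatPoly

open Polynomial

/-- `heatPoly n t * heatKernel t` is the `n`-th derivative of `heatKernel t`; up to scaling,
`heatPoly n` is the `n`-th Hermite polynomial. -/
noncomputable def heatPoly : ℕ → ℝ → ℝ[X]
  | 0, _ => 1
  | n + 1, t => derivative (heatPoly n t) - C t⁻¹ * X * heatPoly n t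

noncomputable def heatKernelDeriv (n : ℕ) (t z : ℝ) : ℝ :=
  (heatPoly n t).eval z * heatKernel t z

lemma heatKernelDeriv_zero (t : ℝ) : heatKernelDeriv 0 t = heatKernel t := by
  ext z; simp [heatKernelDeriv, heatPoly]

@[fun_prop]
lemma continuous_heatKernelDeriv (n : ℕ) (t : ℝ) : Continuous (heatKernelDeriv n t) := by
  unfold heatKernelDeriv; fun_prop

lemma hasDerivAt_heatKernelDeriv (n : ℕ) (t z : ℝ) :
    HasDerivAt (heatKernelDeriv n t) (heatKernelDeriv (n + 1) t z) z := by
  have hexp : HasDerivAt (fun w : ℝ => exp (-w ^ 2 / (2 * t)))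
      (exp (-z ^ 2 / (2 * t)) * (-(2 * z) / (2 * t))) z := by
    simpa using ((hasDerivAt_pow 2 z).neg.div_const (2 * t)).exp
  have hK : HasDerivAt (heatKernel t)
      ((√(2 * π * t))⁻¹ * (exp (-z ^ 2 / (2 * t)) * (-(2 * z) / (2 * t)))) z :=
    hexp.const_mul _
  refine (((heatPoly n t).hasDerivAt z).mul hK).congr_deriv ?_
  simp only [heatKernelDeriv, heatPoly, heatKernel, eval_sub, eval_mul, eval_C, eval_X]
  by_cases ht : t = 0
  · simp [ht]
  · field_simp
    ring

lemma natDegree_heatPoly_le (n : ℕ) (t : ℝ) : (heatPoly n t).natDegree ≤ n := by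
  induction n with
  | zero => simp [heatPoly]
  | succ n ih =>
    refine (natDegree_sub_le _ _).trans (max_le ?_ ?_)
    · exact (natDegree_derivative_le _).trans (by omega)
    · refine natDegree_mul_le.trans ?_
      have : (C t⁻¹ * X : ℝ[X]).natDegree ≤ 1 := natDegree_C_mul_le _ _ |>.trans natDegree_X_le
      omega

lemma exists_abs_coeff_heatPoly_le {a : ℝ} (ha : 0 < a) (n : ℕ) :
    ∃ B, ∀ t, a ≤ t → ∀ i, |(heatPoly n t).coeff i| ≤ B := by
  induction n with
  | zero => exact ⟨1, fun t _ i => by simp only [heatPoly, coeff_one]; split_ifs <;> simp⟩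
  | succ n ih =>
    obtain ⟨B, hB⟩ := ih
    refine ⟨n * B + a⁻¹ * B, fun t hat i => ?_⟩
    have hderiv := abs_coeff_derivative_le (natDegree_heatPoly_le n t) (hB t hat) i
    have hmul : |(C t⁻¹ * X * heatPoly n t).coeff i| ≤ a⁻¹ * B := by
      rw [mul_assoc, coeff_C_mul, abs_mul, abs_of_pos (inv_pos.2 (ha.trans_le hat))]
      gcongr
      exact abs_coeff_X_mul_le (hB t hat) i
    simp only [heatPoly, coeff_sub]
    exact (abs_sub _ _).trans (add_le_add hderiv hmul)

lemma exists_abs_eval_heatPoly_le {a η : ℝ} (ha : 0 < a) (hη : 0 < η) (n : ℕ) :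
    ∃ B, 0 ≤ B ∧ ∀ t, a ≤ t → ∀ z, |(heatPoly n t).eval z| ≤ B * exp (η * z ^ 2) := by
  obtain ⟨B, hB⟩ := exists_abs_coeff_heatPoly_le ha n
  have hB0 : 0 ≤ B := (abs_nonneg _).trans (hB a le_rfl 0)
  refine ⟨(n + 1) * B * exp (n ^ 2 / (4 * η)), by positivity, fun t hat z => ?_⟩
  calc |(heatPoly n t).eval z| ≤ (n + 1) * B * (1 + |z|) ^ n :=
        abs_eval_le_of_abs_coeff_le (natDegree_heatPoly_le n t) (hB t hat) z
    _ ≤ (n + 1) * B * (exp (n ^ 2 / (4 * η)) * exp (η * z ^ 2)) := by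
        gcongr; exact one_add_abs_pow_le_exp n hη z
    _ = _ := by ring

end HeatPoly

lemma heatKernelDeriv_bounded {t : ℝ} (ht : 0 < t) (n : ℕ) :
    ∃ B, ∀ z, |heatKernelDeriv n t z| ≤ B := by
  obtain ⟨B, hB0, hB⟩ := exists_abs_eval_heatPoly_le ht (inv_pos.2 (by positivity : 0 < 2 * t)) n
  refine ⟨B * (√(2 * π * t))⁻¹, fun z => ?_⟩
  rw [heatKernelDeriv, abs_mul, abs_of_pos (heatKernel_pos ht z)]
  calc |(heatPoly n t).eval z| * heatKernel t z
      ≤ B * exp ((2 * t)⁻¹ * z ^ 2) * heatKernel t z :=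
        mul_le_mul_of_nonneg_right (hB t le_rfl z) (heatKernel_pos ht z).le
    _ = B * (exp ((2 * t)⁻¹ * z ^ 2) * heatKernel t z) := mul_assoc _ _ _
    _ ≤ B * (√(2 * π * t))⁻¹ := mul_le_mul_of_nonneg_left (exp_mul_heatKernel_le ht le_rfl z) hB0

lemma exists_abs_heatKernelDeriv_le {a b s θ : ℝ} (ha : 0 < a) (hab : a ≤ b)
    (hbs : b < s) (hθ : 0 < θ) (n : ℕ) :
    ∃ B, 0 ≤ B ∧ ∀ t ∈ Set.Icc a b, ∀ z, |heatKernelDeriv n t z|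
      ≤ B * (heatKernel s z ^ θ * heatKernel t z ^ (1 - θ)) := by
  have hb : 0 < b := ha.trans_le hab
  have hη : 0 < θ * ((2 * b)⁻¹ - (2 * s)⁻¹) :=
    mul_pos hθ (sub_pos.2 (by gcongr))
  obtain ⟨B, hB0, hB⟩ := exists_abs_eval_heatPoly_le ha hη n
  refine ⟨B * √(s / a) ^ θ, by positivity, fun t ⟨hat, htb⟩ z => ?_⟩
  have ht : 0 < t := ha.trans_le hat
  rw [heatKernelDeriv, abs_mul, abs_of_pos (heatKernel_pos ht z)]
  calc |(heatPoly n t).eval z| * heatKernel t z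
      ≤ B * exp (θ * ((2 * b)⁻¹ - (2 * s)⁻¹) * z ^ 2) * heatKernel t z :=
        mul_le_mul_of_nonneg_right (hB t hat z) (heatKernel_pos ht z).le
    _ = B * (exp (θ * ((2 * b)⁻¹ - (2 * s)⁻¹) * z ^ 2) * heatKernel t z) := mul_assoc _ _ _
    _ ≤ B * (√(s / a) ^ θ * (heatKernel s z ^ θ * heatKernel t z ^ (1 - θ))) :=
        mul_le_mul_of_nonneg_left
          (exp_mul_heatKernel_le_rpow_mul_rpow ha hat htb (hb.trans hbs) hθ.le z) hB0
    _ = _ := by ring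

section HeatFlow

variable {f : ℝ → ℝ} {s t : ℝ}

lemma heatP_eq_integral_heatKernel (f : ℝ → ℝ) (t x : ℝ) :
    heatP f t x = ∫ y, f y * heatKernel t (x - y) := rfl

lemma integrable_mul_heatKernelDeriv (hfi : Integrable f) (ht : 0 < t) (n : ℕ) (x : ℝ) :
    Integrable (fun y => f y * heatKernelDeriv n t (x - y)) := by
  obtain ⟨B, hB⟩ := heatKernelDeriv_bounded ht n
  exact hfi.mul_bdd (by fun_prop) (Eventually.of_forall fun y => hB (x - y))

lemma integrable_mul_heatKernel (hfi : Integrable f) (ht : 0 < t) (x : ℝ) :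
    Integrable (fun y => f y * heatKernel t (x - y)) := by
  simpa [heatKernelDeriv_zero] using integrable_mul_heatKernelDeriv hfi ht 0 x

lemma heatP_pos (hf0 : ∀ x, 0 ≤ f x) (hfi : Integrable f) (hf : 0 < ∫ x, f x) (ht : 0 < t)
    (x : ℝ) : 0 < heatP f t x := by
  rw [heatP_eq_integral_heatKernel, integral_pos_iff_support_of_nonneg
    (fun y => mul_nonneg (hf0 y) (heatKernel_pos ht _).le) (integrable_mul_heatKernel hfi ht x)]
  have hsupp : (Function.support fun y => f y * heatKernel t (x - y)) = Function.support f := by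
    ext y; simp [(heatKernel_pos ht _).ne']
  rw [hsupp]
  exact (integral_pos_iff_support_of_nonneg hf0 hfi).1 hf

lemma heatP_le_sqrt_mul_heatP (hf0 : ∀ x, 0 ≤ f x) (hfi : Integrable f) (ht : 0 < t)
    (hts : t ≤ s) (x : ℝ) : heatP f t x ≤ √(s / t) * heatP f s x := by
  have hs : 0 < s := ht.trans_le hts
  rw [heatP_eq_integral_heatKernel, heatP_eq_integral_heatKernel, ← integral_const_mul]
  refine integral_mono (integrable_mul_heatKernel hfi ht x)
    ((integrable_mul_heatKernel hfi hs x).const_mul _) fun y => ?_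
  calc f y * heatKernel t (x - y) ≤ f y * (√(s / t) * heatKernel s (x - y)) :=
        mul_le_mul_of_nonneg_left (heatKernel_le_sqrt_mul_heatKernel ht hts _) (hf0 y)
    _ = √(s / t) * (f y * heatKernel s (x - y)) := by ring

lemma hasDerivAt_integral_mul_heatKernelDeriv (hfi : Integrable f) (ht : 0 < t) (n : ℕ)
    (x : ℝ) :
    HasDerivAt (fun x => ∫ y, f y * heatKernelDeriv n t (x - y))
      (∫ y, f y * heatKernelDeriv (n + 1) t (x - y)) x := by
  obtain ⟨B, hB⟩ := heatKernelDeriv_bounded ht (n + 1)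
  refine (hasDerivAt_integral_of_dominated_loc_of_deriv_le
    (F' := fun x y => f y * heatKernelDeriv (n + 1) t (x - y)) (bound := fun y => |f y| * B)
    univ_mem (Eventually.of_forall fun x => (integrable_mul_heatKernelDeriv hfi ht n x).1)
    (integrable_mul_heatKernelDeriv hfi ht n x)
    (integrable_mul_heatKernelDeriv hfi ht (n + 1) x).1 ?_ (hfi.abs.mul_const B) ?_).2
  · refine Eventually.of_forall fun y x _ => ?_
    rw [norm_mul, Real.norm_eq_abs, Real.norm_eq_abs]
    exact mul_le_mul_of_nonneg_left (hB _) (abs_nonneg _)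
  · refine Eventually.of_forall fun y x _ => ?_
    simpa using ((hasDerivAt_heatKernelDeriv n t (x - y)).comp x
      ((hasDerivAt_id x).sub_const y)).const_mul (f y)

lemma iteratedDeriv_heatP (hfi : Integrable f) (ht : 0 < t) (n : ℕ) :
    iteratedDeriv n (heatP f t) = fun x => ∫ y, f y * heatKernelDeriv n t (x - y) := by
  induction n with
  | zero => ext x; simp [heatKernelDeriv_zero, heatP_eq_integral_heatKernel]
  | succ n ih =>
    ext x
    rw [iteratedDeriv_succ, ih]
    exact (hasDerivAt_integral_mul_heatKernelDeriv hfi ht n x).deriv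

lemma tendsto_heatP_cocompact (hfi : Integrable f) (ht : 0 < t) :
    Tendsto (heatP f t) (cocompact ℝ) (𝓝 0) := by
  have hdecay (y : ℝ) : Tendsto (fun x => f y * heatKernel t (x - y)) (cocompact ℝ) (𝓝 0) := by
    simpa using ((tendsto_heatKernel_cocompact ht).comp
      (Homeomorph.subRight y).isClosedEmbedding.tendsto_cocompact).const_mul (f y)
  have hdom (l : Filter ℝ) [l.IsCountablyGenerated] (hl : l ≤ cocompact ℝ) :
      Tendsto (fun x => ∫ y, f y * heatKernel t (x - y)) l (𝓝 0) := by
    simpa using tendsto_integral_filter_of_dominated_convergence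
      (fun y => |f y| * (√(2 * π * t))⁻¹)
      (Eventually.of_forall fun x => (integrable_mul_heatKernel hfi ht x).1)
      (Eventually.of_forall fun x => Eventually.of_forall fun y => by
        rw [norm_mul, Real.norm_eq_abs, Real.norm_of_nonneg (heatKernel_pos ht _).le]
        exact mul_le_mul_of_nonneg_left (heatKernel_le ht _) (abs_nonneg _))
      (hfi.abs.mul_const _) (Eventually.of_forall fun y => (hdecay y).mono_left hl)
  rw [cocompact_eq_atBot_atTop]
  exact tendsto_sup.2 ⟨hdom _ atBot_le_cocompact, hdom _ atTop_le_cocompact⟩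

end HeatFlow

section RatioBounds

variable {f : ℝ → ℝ} {a b s θ : ℝ}

lemma integral_mul_heatKernel_rpow_mul_rpow_le (hf0 : ∀ x, 0 ≤ f x) (hfi : Integrable f)
    {t : ℝ} (ht : 0 < t) (hs : 0 < s) (hθ0 : 0 ≤ θ) (hθ1 : θ ≤ 1) (x : ℝ) :
    Integrable (fun y => f y * (heatKernel s (x - y) ^ θ * heatKernel t (x - y) ^ (1 - θ))) ∧
      ∫ y, f y * (heatKernel s (x - y) ^ θ * heatKernel t (x - y) ^ (1 - θ))
        ≤ heatP f s x ^ θ * heatP f t x ^ (1 - θ) := by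
  have hsplit : (fun y => f y * (heatKernel s (x - y) ^ θ * heatKernel t (x - y) ^ (1 - θ)))
      = fun y => (f y * heatKernel s (x - y)) ^ θ * (f y * heatKernel t (x - y)) ^ (1 - θ) :=
    funext fun y => mul_rpow_mul_rpow_eq (hf0 y) (heatKernel_pos hs _).le
      (heatKernel_pos ht _).le
  have hF0 : 0 ≤ fun y => f y * heatKernel s (x - y) :=
    fun y => mul_nonneg (hf0 y) (heatKernel_pos hs _).le
  have hG0 : 0 ≤ fun y => f y * heatKernel t (x - y) :=
    fun y => mul_nonneg (hf0 y) (heatKernel_pos ht _).le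
  rw [hsplit]
  exact ⟨integrable_rpow_mul_rpow hF0 hG0 (integrable_mul_heatKernel hfi hs x)
      (integrable_mul_heatKernel hfi ht x) hθ0 (sub_nonneg.2 hθ1) (add_sub_cancel _ _),
    integral_rpow_mul_rpow_le hF0 hG0 (integrable_mul_heatKernel hfi hs x)
      (integrable_mul_heatKernel hfi ht x) hθ0 (sub_nonneg.2 hθ1) (add_sub_cancel _ _)⟩

lemma exists_abs_pk_le (hf0 : ∀ x, 0 ≤ f x) (hfi : Integrable f) (ha : 0 < a) (hab : a ≤ b)
    (hbs : b < s) (hθ0 : 0 < θ) (hθ1 : θ ≤ 1) (n : ℕ) :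
    ∃ B, 0 ≤ B ∧ ∀ t ∈ Set.Icc a b, ∀ x,
      |pk f n t x| ≤ B * (heatP f s x ^ θ * heatP f t x ^ (1 - θ)) := by
  obtain ⟨B, hB0, hB⟩ := exists_abs_heatKernelDeriv_le ha hab hbs hθ0 n
  refine ⟨B, hB0, fun t ht x => ?_⟩
  have ht0 : 0 < t := ha.trans_le ht.1
  obtain ⟨hint, hHolder⟩ := integral_mul_heatKernel_rpow_mul_rpow_le hf0 hfi ht0
    (ht0.trans_le (ht.2.trans hbs.le)) hθ0.le hθ1 x
  rw [pk, iteratedDeriv_heatP hfi ht0]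
  calc |∫ y, f y * heatKernelDeriv n t (x - y)|
      ≤ ∫ y, |f y * heatKernelDeriv n t (x - y)| := abs_integral_le_integral_abs
    _ ≤ ∫ y, B * (f y * (heatKernel s (x - y) ^ θ * heatKernel t (x - y) ^ (1 - θ))) := by
        refine integral_mono (integrable_mul_heatKernelDeriv hfi ht0 n x).abs
          (hint.const_mul B) fun y => ?_
        rw [abs_mul, abs_of_nonneg (hf0 y), mul_left_comm]
        exact mul_le_mul_of_nonneg_left (hB t ht _) (hf0 y)
    _ ≤ B * (heatP f s x ^ θ * heatP f t x ^ (1 - θ)) := by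
        rw [integral_const_mul]
        exact mul_le_mul_of_nonneg_left hHolder hB0

lemma exists_abs_pk_div_heatP_le (hf0 : ∀ x, 0 ≤ f x) (hf : 0 < ∫ x, f x) (ha : 0 < a)
    (hab : a ≤ b) (hbs : b < s) (hθ0 : 0 < θ) (hθ1 : θ ≤ 1) (n : ℕ) :
    ∃ B, 0 ≤ B ∧ ∀ t ∈ Set.Icc a b, ∀ x,
      |pk f n t x / heatP f t x| ≤ B * (heatP f s x / heatP f t x) ^ θ := by
  have hfi : Integrable f := .of_integral_ne_zero hf.ne'
  obtain ⟨B, hB0, hB⟩ := exists_abs_pk_le hf0 hfi ha hab hbs hθ0 hθ1 n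
  refine ⟨B, hB0, fun t ht x => ?_⟩
  have ht0 : 0 < t := ha.trans_le ht.1
  have hPt := heatP_pos hf0 hfi hf ht0 x
  have hPs := heatP_pos hf0 hfi hf (ht0.trans_le (ht.2.trans hbs.le)) x
  rw [abs_div, abs_of_pos hPt, div_le_iff₀ hPt]
  calc |pk f n t x| ≤ B * (heatP f s x ^ θ * heatP f t x ^ (1 - θ)) := hB t ht x
    _ = B * (heatP f s x / heatP f t x) ^ θ * heatP f t x := by
        rw [div_rpow hPs.le hPt.le, rpow_sub hPt, rpow_one]
        field_simp

lemma exists_prod_abs_pk_div_heatP_le {ι : Type*} [Fintype ι] (hf0 : ∀ x, 0 ≤ f x)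
    (hf : 0 < ∫ x, f x) (ha : 0 < a) (hab : a ≤ b) (hbs : b < s) (hθ0 : 0 < θ) (hθ1 : θ ≤ 1)
    (n k : ι → ℕ) :
    ∃ B, 0 ≤ B ∧ ∀ t ∈ Set.Icc a b, ∀ x, ∏ i, |pk f (n i) t x / heatP f t x| ^ k i
      ≤ B * (heatP f s x / heatP f t x) ^ (θ * ∑ i, k i) := by
  choose B hB0 hB using fun i => exists_abs_pk_div_heatP_le hf0 hf ha hab hbs hθ0 hθ1 (n i)
  refine ⟨∏ i, B i ^ k i, Finset.prod_nonneg fun i _ => pow_nonneg (hB0 i) _, fun t ht x => ?_⟩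
  have hfi : Integrable f := .of_integral_ne_zero hf.ne'
  have ht0 : 0 < t := ha.trans_le ht.1
  have hw : 0 ≤ heatP f s x / heatP f t x := div_nonneg
    (heatP_pos hf0 hfi hf (ht0.trans_le (ht.2.trans hbs.le)) x).le (heatP_pos hf0 hfi hf ht0 x).le
  calc ∏ i, |pk f (n i) t x / heatP f t x| ^ k i
      ≤ ∏ i, (B i * (heatP f s x / heatP f t x) ^ θ) ^ k i :=
        Finset.prod_le_prod (fun i _ => by positivity) fun i _ =>
          pow_le_pow_left₀ (abs_nonneg _) (hB i t ht x) _
    _ = (∏ i, B i ^ k i) * (heatP f s x / heatP f t x) ^ (θ * ∑ i, k i) := by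
        rw [Finset.prod_congr rfl fun i _ => mul_pow _ _ _, Finset.prod_mul_distrib,
          Finset.prod_pow_eq_pow_sum, rpow_mul hw, rpow_natCast]

end RatioBounds

theorem exists_heatP_rpow_mul_prod_abs_le {f : ℝ → ℝ} {a b s α : ℝ} {ι : Type*} [Fintype ι]
    (hf0 : ∀ x, 0 ≤ f x) (hf : 0 < ∫ x, f x) (hα : 0 < α) (n k : ι → ℕ) (ha : 0 < a)
    (hab : a ≤ b) (hbs : b < s) :
    ∃ C, ∀ t ∈ Set.Icc a b, ∀ x,
      heatP f t x ^ α * ∏ i, |pk f (n i) t x / heatP f t x| ^ k i ≤ C * heatP f s x ^ α := by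
  have hfi : Integrable f := .of_integral_ne_zero hf.ne'
  set K : ℝ := ((∑ i, k i : ℕ) : ℝ)
  -- any `θ ∈ (0, 1]` with `θ K ≤ α` would do
  set θ := min 1 (α / (K + 1))
  have hθ0 : 0 < θ := lt_min one_pos (by positivity)
  have hθK : θ * K ≤ α := by
    calc θ * K ≤ α / (K + 1) * K := by gcongr; exact min_le_right _ _
      _ = α * (K / (K + 1)) := by ring
      _ ≤ α := mul_le_of_le_one_right hα.le ((div_le_one (by positivity)).2 (by linarith))
  obtain ⟨B, hB0, hB⟩ :=
    exists_prod_abs_pk_div_heatP_le hf0 hf ha hab hbs hθ0 (min_le_left _ _) n k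
  refine ⟨B * √(s / a) ^ (α - θ * K), fun t ht x => ?_⟩
  have ht0 : 0 < t := ha.trans_le ht.1
  have hts : t ≤ s := ht.2.trans hbs.le
  have hPt := heatP_pos hf0 hfi hf ht0 x
  have hPs := heatP_pos hf0 hfi hf (ht0.trans_le hts) x
  have hcmp : heatP f t x ≤ √(s / a) * heatP f s x :=
    (heatP_le_sqrt_mul_heatP hf0 hfi ht0 hts x).trans <| mul_le_mul_of_nonneg_right
      (sqrt_le_sqrt (div_le_div_of_nonneg_left (ht0.trans_le hts).le ha ht.1)) hPs.le
  calc heatP f t x ^ α * ∏ i, |pk f (n i) t x / heatP f t x| ^ k i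
      ≤ heatP f t x ^ α * (B * (heatP f s x / heatP f t x) ^ (θ * K)) :=
        mul_le_mul_of_nonneg_left (hB t ht x) (rpow_nonneg hPt.le α)
    _ = B * (heatP f t x ^ α * (heatP f s x / heatP f t x) ^ (θ * K)) := by ring
    _ ≤ B * (√(s / a) ^ (α - θ * K) * heatP f s x ^ α) :=
        mul_le_mul_of_nonneg_left (rpow_mul_div_rpow_le hPt hPs hcmp hθK) hB0
    _ = B * √(s / a) ^ (α - θ * K) * heatP f s x ^ α := by ring

theorem heat_density_ratio_bound_general
    (f : ℝ → ℝ) (hf0 : ∀ x, 0 ≤ f x)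
    (hf1 : (∫ x : ℝ, f x) = 1)
    (α : ℝ) (hα : 0 < α)
    (r : ℕ) (n k : Fin r → ℕ)
    (a b ε : ℝ) (ha : 0 < a) (hab : a < b) (hε : 0 < ε) :
    (∃ C : ℝ, ∀ t ∈ Set.Icc a b, ∀ x : ℝ,
      heatP f t x ^ α * ∏ i : Fin r, |pk f (n i) t x / heatP f t x| ^ (k i)
        ≤ C * heatP f (b + ε) x ^ α)
    ∧ ∀ t ∈ Set.Icc a b,
      Filter.Tendsto
        (fun x : ℝ =>
          heatP f t x ^ α * ∏ i : Fin r, (pk f (n i) t x / heatP f t x) ^ (k i))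
        (Filter.cocompact ℝ) (nhds 0) := by
  have hf : 0 < ∫ x, f x := hf1 ▸ one_pos
  have hfi : Integrable f := .of_integral_ne_zero hf.ne'
  obtain ⟨C, hC⟩ := exists_heatP_rpow_mul_prod_abs_le hf0 hf hα n k ha hab.le
    (lt_add_of_pos_right b hε)
  refine ⟨⟨C, hC⟩, fun t ht => ?_⟩
  have hdecay : Tendsto (fun x => C * heatP f (b + ε) x ^ α) (cocompact ℝ) (𝓝 0) := by
    simpa [zero_rpow hα.ne'] using
      ((continuousAt_rpow_const 0 α (Or.inr hα.le)).tendsto.comp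
        (tendsto_heatP_cocompact hfi (by linarith))).const_mul C
  refine squeeze_zero_norm (fun x => ?_) hdecay
  have hPt := heatP_pos hf0 hfi hf (ha.trans_le ht.1) x
  rw [Real.norm_eq_abs, abs_mul, abs_of_pos (rpow_pos_of_pos hPt α), Finset.abs_prod]
  simpa only [abs_pow] using hC t ht x

/-- Uniform domination of products of ratios of spatial derivatives of the heat-flow
density, and the resulting decay at infinity. -/
theorem heat_density_ratio_bound
    (f : ℝ → ℝ) (hfm : Measurable f) (hf0 : ∀ x, 0 ≤ f x)
    (hf1 : (∫ x : ℝ, f x) = 1)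
    (α : ℝ) (hα : 0 < α)
    (r : ℕ) (hr : 0 < r) (n k : Fin r → ℕ)
    (hn : ∀ i, 0 < n i) (hk : ∀ i, 0 < k i)
    (a b ε : ℝ) (ha : 0 < a) (hab : a < b) (hε : 0 < ε) :
    (∃ C : ℝ, ∀ t ∈ Set.Icc a b, ∀ x : ℝ,
      heatP f t x ^ α * ∏ i : Fin r, |pk f (n i) t x / heatP f t x| ^ (k i)
        ≤ C * heatP f (b + ε) x ^ α)
    ∧ ∀ t ∈ Set.Icc a b,
      Filter.Tendsto
        (fun x : ℝ =>
          heatP f t x ^ α * ∏ i : Fin r, (pk f (n i) t x / heatP f t x) ^ (k i))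
        (Filter.cocompact ℝ) (nhds 0) :=
  heat_density_ratio_bound_general f hf0 hf1 α hα r n k a b ε ha hab hε
end

section
/- Let α ∈ (0,∞) with α ≠ 1 and let t ∈ (0, t_α). Then h_α(p(·,t)) ≥ h_α(G_t) = (1/2)·log(2πt) + (1/(2(α−1)))·log α, where G_t is a centered Gaussian random variable with variance t; that is, ∫ p(x,t)^α dx ≤ ∫ φ_t(x)^α dx when α > 1 and ∫ p(x,t)^α dx ≥ ∫ φ_t(x)^α dx when 0 < α < 1, where φ_t(x) = (2πt)^{-1/2} exp(−x²/(2t)). -/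
open MeasureTheory Real Filter
open scoped Classical

/-- The centered Gaussian density with variance t. -/
noncomputable def gaussDen (t x : ℝ) : ℝ :=
  (Real.sqrt (2 * Real.pi * t))⁻¹ * Real.exp (-x ^ 2 / (2 * t))

/-!
The law of `X_t` is the law of `X` convolved with the Gaussian of variance `t`, so
`p_t = f ⋆ φ_t`. For a probability density `f`, Jensen's inequality for `z ↦ z ^ α` under
the probability measure `f(y) dy` gives `(f ⋆ φ)^α ≤ f ⋆ φ^α` pointwise when `α ≥ 1` and the
reverse inequality when `α ≤ 1`; integrating in `x` (Tonelli) yields `∫ p_t^α ≤ ∫ φ_t^α`,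
respectively `∫ p_t^α ≥ ∫ φ_t^α`. For `α < 1` one also needs `∫ p_t^α < ∞`: the semigroup
property `p_s = φ_{s-t} ⋆ p_t` and the same inequality give `∫ p_t^α ≤ ∫ p_s^α`, which is finite
for some `s > t` by the hypothesis `t < t_α`.
-/

open ProbabilityTheory
open scoped ENNReal NNReal

section Jensen

variable {Ω : Type*} [MeasurableSpace Ω] {ν : Measure Ω} [IsProbabilityMeasure ν]
  {g : Ω → ℝ≥0∞} {p : ℝ}

theorem ENNReal.rpow_lintegral_le_lintegral_rpow (hg : AEMeasurable g ν) (hp : 1 ≤ p) :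
    (∫⁻ x, g x ∂ν) ^ p ≤ ∫⁻ x, g x ^ p ∂ν := by
  have h := eLpNorm'_le_eLpNorm'_of_exponent_le one_pos hp ν hg.aestronglyMeasurable
  simp only [eLpNorm'_eq_lintegral_enorm, enorm_eq_self, ENNReal.rpow_one, div_one,
    one_div] at h
  exact (ENNReal.le_rpow_inv_iff (by linarith)).1 h

theorem ENNReal.lintegral_rpow_le_rpow_lintegral (hg : AEMeasurable g ν) (hp0 : 0 < p)
    (hp1 : p ≤ 1) : ∫⁻ x, g x ^ p ∂ν ≤ (∫⁻ x, g x ∂ν) ^ p := by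
  have h := eLpNorm'_le_eLpNorm'_of_exponent_le hp0 hp1 ν hg.aestronglyMeasurable
  simp only [eLpNorm'_eq_lintegral_enorm, enorm_eq_self, ENNReal.rpow_one, div_one,
    one_div] at h
  exact (ENNReal.rpow_inv_le_iff hp0).1 h

end Jensen

theorem isProbabilityMeasure_withDensity {Ω : Type*} [MeasurableSpace Ω] {μ : Measure Ω}
    {f : Ω → ℝ≥0∞} (hf1 : ∫⁻ x, f x ∂μ = 1) : IsProbabilityMeasure (μ.withDensity f) :=
  ⟨by rw [withDensity_apply _ MeasurableSet.univ, Measure.restrict_univ, hf1]⟩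

section LConvolution

variable {G : Type*} [MeasurableSpace G] [AddGroup G] [MeasurableAdd₂ G] [MeasurableNeg G]
  {μ : Measure G} {f g : G → ℝ≥0∞} {p : ℝ}

theorem lintegral_lconvolution [SFinite μ] [μ.IsAddLeftInvariant] (hf : Measurable f)
    (hg : Measurable g) : ∫⁻ x, (f ⋆ₗ[μ] g) x ∂μ = (∫⁻ x, f x ∂μ) * ∫⁻ x, g x ∂μ := by
  simp only [lconvolution_def]
  rw [lintegral_lintegral_swap (by fun_prop)]
  have (y : G) : ∫⁻ x, f y * g (-y + x) ∂μ = f y * ∫⁻ x, g x ∂μ := by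
    rw [lintegral_const_mul _ (by fun_prop), lintegral_add_left_eq_self]
  simp_rw [this]
  exact lintegral_mul_const _ hf

theorem lconvolution_pos (hf : Measurable f) (hf0 : ∫⁻ x, f x ∂μ ≠ 0) (hg : Measurable g)
    (hg0 : ∀ x, 0 < g x) (x : G) : 0 < (f ⋆ₗ[μ] g) x := by
  rw [lconvolution_def, pos_iff_ne_zero, Ne, lintegral_eq_zero_iff (by fun_prop)]
  refine fun h => hf0 ((lintegral_eq_zero_iff hf).2 ?_)
  filter_upwards [h] with y hy
  simpa [(hg0 _).ne'] using hy

theorem lconvolution_eq_lintegral_withDensity (hf : Measurable f) (hg : Measurable g) (x : G) :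
    (f ⋆ₗ[μ] g) x = ∫⁻ y, g (-y + x) ∂μ.withDensity f :=
  (lintegral_withDensity_eq_lintegral_mul μ hf (by fun_prop)).symm

theorem rpow_lconvolution_le (hf : Measurable f) (hf1 : ∫⁻ x, f x ∂μ = 1) (hg : Measurable g)
    (hp : 1 ≤ p) (x : G) : (f ⋆ₗ[μ] g) x ^ p ≤ (f ⋆ₗ[μ] fun y => g y ^ p) x := by
  have := isProbabilityMeasure_withDensity hf1
  rw [lconvolution_eq_lintegral_withDensity hf hg,
    lconvolution_eq_lintegral_withDensity hf (hg.pow_const p)]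
  exact ENNReal.rpow_lintegral_le_lintegral_rpow (by fun_prop) hp

theorem lconvolution_rpow_le (hf : Measurable f) (hf1 : ∫⁻ x, f x ∂μ = 1) (hg : Measurable g)
    (hp0 : 0 < p) (hp1 : p ≤ 1) (x : G) :
    (f ⋆ₗ[μ] fun y => g y ^ p) x ≤ (f ⋆ₗ[μ] g) x ^ p := by
  have := isProbabilityMeasure_withDensity hf1
  rw [lconvolution_eq_lintegral_withDensity hf hg,
    lconvolution_eq_lintegral_withDensity hf (hg.pow_const p)]
  exact ENNReal.lintegral_rpow_le_rpow_lintegral (by fun_prop) hp0 hp1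

variable [SFinite μ] [μ.IsAddLeftInvariant]

theorem lintegral_rpow_lconvolution_le (hf : Measurable f) (hf1 : ∫⁻ x, f x ∂μ = 1)
    (hg : Measurable g) (hp : 1 ≤ p) :
    ∫⁻ x, (f ⋆ₗ[μ] g) x ^ p ∂μ ≤ ∫⁻ x, g x ^ p ∂μ :=
  calc ∫⁻ x, (f ⋆ₗ[μ] g) x ^ p ∂μ ≤ ∫⁻ x, (f ⋆ₗ[μ] fun y => g y ^ p) x ∂μ :=
        lintegral_mono (rpow_lconvolution_le hf hf1 hg hp)
    _ = ∫⁻ x, g x ^ p ∂μ := by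
        rw [lintegral_lconvolution hf (hg.pow_const p), hf1, one_mul]

theorem lintegral_rpow_le_lintegral_rpow_lconvolution (hf : Measurable f)
    (hf1 : ∫⁻ x, f x ∂μ = 1) (hg : Measurable g) (hp0 : 0 < p) (hp1 : p ≤ 1) :
    ∫⁻ x, g x ^ p ∂μ ≤ ∫⁻ x, (f ⋆ₗ[μ] g) x ^ p ∂μ :=
  calc ∫⁻ x, g x ^ p ∂μ = ∫⁻ x, (f ⋆ₗ[μ] fun y => g y ^ p) x ∂μ := by
        rw [lintegral_lconvolution hf (hg.pow_const p), hf1, one_mul]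
    _ ≤ ∫⁻ x, (f ⋆ₗ[μ] g) x ^ p ∂μ :=
        lintegral_mono (lconvolution_rpow_le hf hf1 hg hp0 hp1)

end LConvolution

section Gaussian

variable {t α : ℝ}

theorem gaussDen_eq_gaussianPDFReal (ht : 0 ≤ t) : gaussDen t = gaussianPDFReal 0 t.toNNReal := by
  ext x
  simp [gaussDen, gaussianPDFReal, Real.coe_toNNReal _ ht]

theorem gaussDen_nonneg (t x : ℝ) : 0 ≤ gaussDen t x := by
  unfold gaussDen; positivity

theorem measurable_gaussDen (t : ℝ) : Measurable (gaussDen t) := by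
  unfold gaussDen; fun_prop

theorem gaussDen_le (ht : 0 ≤ t) (x : ℝ) : gaussDen t x ≤ (√(2 * π * t))⁻¹ := by
  have : -x ^ 2 / (2 * t) ≤ 0 := div_nonpos_of_nonpos_of_nonneg (by nlinarith) (by linarith)
  exact mul_le_of_le_one_right (by positivity) (exp_le_one_iff.2 this)

theorem gaussDen_rpow (ht : 0 < t) (α x : ℝ) :
    gaussDen t x ^ α = (√(2 * π * t))⁻¹ ^ α * exp (-(α / (2 * t)) * x ^ 2) := by
  rw [gaussDen, mul_rpow (by positivity) (exp_pos _).le, ← exp_mul]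
  ring_nf

theorem integrable_gaussDen_rpow (ht : 0 < t) (hα : 0 < α) :
    Integrable fun x => gaussDen t x ^ α := by
  simp_rw [gaussDen_rpow ht]
  exact (integrable_exp_neg_mul_sq (by positivity)).const_mul _

theorem integral_gaussDen_rpow (ht : 0 < t) (hα : 0 < α) :
    ∫ x, gaussDen t x ^ α = √(2 * π * t) ^ (1 - α) / √α := by
  have hc : 0 < √(2 * π * t) := by positivity
  simp_rw [gaussDen_rpow ht]
  rw [integral_const_mul, integral_gaussian, inv_rpow hc.le, rpow_sub hc, rpow_one,
    show π / (α / (2 * t)) = 2 * π * t / α by field_simp, sqrt_div (by positivity)]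
  field_simp

theorem integral_gaussDen_rpow_pos (ht : 0 < t) (hα : 0 < α) : 0 < ∫ x, gaussDen t x ^ α := by
  rw [integral_gaussDen_rpow ht hα]; positivity

theorem inv_one_sub_mul_log_integral_gaussDen_rpow (ht : 0 < t) (hα : 0 < α) (hα1 : α ≠ 1) :
    (1 - α)⁻¹ * log (∫ x, gaussDen t x ^ α)
      = 1 / 2 * log (2 * π * t) + 1 / (2 * (α - 1)) * log α := by
  have h1 : 1 - α ≠ 0 := sub_ne_zero.2 hα1.symm
  have h2 : α - 1 ≠ 0 := sub_ne_zero.2 hα1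
  rw [integral_gaussDen_rpow ht hα, log_div (by positivity) (by positivity),
    log_rpow (by positivity), log_sqrt (by positivity), log_sqrt hα.le]
  field_simp
  ring

theorem lintegral_gaussianPDF_rpow (ht : 0 < t) (hα : 0 < α) :
    ∫⁻ x, gaussianPDF 0 t.toNNReal x ^ α = ENNReal.ofReal (∫ x, gaussDen t x ^ α) := by
  rw [ofReal_integral_eq_lintegral_ofReal (integrable_gaussDen_rpow ht hα)
    (ae_of_all _ fun x => rpow_nonneg (gaussDen_nonneg t x) α)]
  refine lintegral_congr fun x => ?_
  rw [gaussianPDF_def, ← gaussDen_eq_gaussianPDFReal ht.le,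
    ENNReal.ofReal_rpow_of_nonneg (gaussDen_nonneg t x) hα.le]

/- Obtained from the convolution of Gaussian measures, hence only almost everywhere. -/
theorem lconvolution_gaussianPDF_add_ae_eq {F : ℝ → ℝ≥0∞} (hF : Measurable F) {v₁ v₂ : ℝ≥0}
    (hv₁ : v₁ ≠ 0) (hv₂ : v₂ ≠ 0) :
    F ⋆ₗ gaussianPDF 0 (v₁ + v₂) =ᵐ[volume] gaussianPDF 0 v₂ ⋆ₗ (F ⋆ₗ gaussianPDF 0 v₁) := by
  have hΦ (v : ℝ≥0) : Measurable (gaussianPDF 0 v) := measurable_gaussianPDF 0 v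
  rw [lconvolution_comm (f := gaussianPDF 0 v₂)]
  refine (withDensity_eq_iff_of_sigmaFinite (by fun_prop) (by fun_prop)).1 ?_
  rw [← conv_withDensity_eq_lconvolution hF (hΦ _),
    ← conv_withDensity_eq_lconvolution (measurable_lconvolution _ hF (hΦ _)) (hΦ _),
    ← conv_withDensity_eq_lconvolution hF (hΦ _), ← gaussianReal_of_var_ne_zero _ hv₁,
    ← gaussianReal_of_var_ne_zero _ hv₂,
    ← gaussianReal_of_var_ne_zero _ fun h => hv₁ (add_eq_zero.1 h).1, Measure.conv_assoc,
    gaussianReal_conv_gaussianReal, add_zero]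

end Gaussian

noncomputable def heatPDF (f : ℝ → ℝ) (t : ℝ) : ℝ → ℝ≥0∞ :=
  (fun y => ENNReal.ofReal (f y)) ⋆ₗ gaussianPDF 0 t.toNNReal

section HeatFlow

variable {f : ℝ → ℝ} {t α : ℝ}

theorem measurable_heatPDF (hfm : Measurable f) (t : ℝ) : Measurable (heatPDF f t) :=
  measurable_lconvolution _ (by fun_prop) (measurable_gaussianPDF 0 _)

theorem lintegral_ofReal_eq_one (hf0 : ∀ x, 0 ≤ f x) (hfi : Integrable f)
    (hf1 : ∫ x, f x = 1) : ∫⁻ x, ENNReal.ofReal (f x) = 1 := by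
  rw [← ofReal_integral_eq_lintegral_ofReal hfi (ae_of_all _ hf0), hf1, ENNReal.ofReal_one]

theorem heatP_nonneg (hf0 : ∀ x, 0 ≤ f x) (x : ℝ) : 0 ≤ heatP f t x :=
  integral_nonneg fun y => mul_nonneg (hf0 y) (gaussDen_nonneg t (x - y))

theorem ofReal_heatP (hf0 : ∀ x, 0 ≤ f x) (hfi : Integrable f) (ht : 0 ≤ t) (x : ℝ) :
    ENNReal.ofReal (heatP f t x) = heatPDF f t x := by
  have hint : Integrable fun y => f y * gaussDen t (x - y) :=
    hfi.mul_bdd (c := (√(2 * π * t))⁻¹)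
      ((measurable_gaussDen t).comp (measurable_const.sub measurable_id)).aestronglyMeasurable
      (ae_of_all _ fun y => by
        rw [norm_of_nonneg (gaussDen_nonneg _ _)]; exact gaussDen_le ht _)
  change ENNReal.ofReal (∫ y, f y * gaussDen t (x - y)) = _
  rw [ofReal_integral_eq_lintegral_ofReal hint
    (ae_of_all _ fun y => mul_nonneg (hf0 y) (gaussDen_nonneg _ _))]
  refine lintegral_congr fun y => ?_
  rw [ENNReal.ofReal_mul (hf0 y), gaussianPDF_def, ← gaussDen_eq_gaussianPDFReal ht,
    neg_add_eq_sub]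

theorem lintegral_ofReal_heatP_rpow (hf0 : ∀ x, 0 ≤ f x) (hfi : Integrable f) (ht : 0 ≤ t)
    (hα : 0 ≤ α) : ∫⁻ x, ENNReal.ofReal (heatP f t x ^ α) = ∫⁻ x, heatPDF f t x ^ α := by
  refine lintegral_congr fun x => ?_
  rw [← ENNReal.ofReal_rpow_of_nonneg (heatP_nonneg hf0 x) hα, ofReal_heatP hf0 hfi ht]

theorem integral_heatP_rpow (hfm : Measurable f) (hf0 : ∀ x, 0 ≤ f x) (hfi : Integrable f)
    (ht : 0 ≤ t) (hα : 0 ≤ α) :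
    ∫ x, heatP f t x ^ α = (∫⁻ x, heatPDF f t x ^ α).toReal := by
  have hP : heatP f t = fun x => (heatPDF f t x).toReal := by
    ext x
    rw [← ofReal_heatP hf0 hfi ht, ENNReal.toReal_ofReal (heatP_nonneg hf0 x)]
  have hPm : Measurable (heatP f t) := hP ▸ (measurable_heatPDF hfm t).ennreal_toReal
  rw [integral_eq_lintegral_of_nonneg_ae
    (ae_of_all _ fun x => rpow_nonneg (heatP_nonneg hf0 x) α)
    (hPm.pow_const α).aestronglyMeasurable, lintegral_ofReal_heatP_rpow hf0 hfi ht hα]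

theorem lintegral_heatPDF_rpow_pos (hfm : Measurable f) (hf0 : ∀ x, 0 ≤ f x)
    (hfi : Integrable f) (hf1 : ∫ x, f x = 1) (ht : 0 < t) (α : ℝ) :
    0 < ∫⁻ x, heatPDF f t x ^ α := by
  have hpos (x : ℝ) : 0 < heatPDF f t x ^ α := by
    refine ENNReal.rpow_pos (lconvolution_pos (by fun_prop) ?_ (measurable_gaussianPDF 0 _)
      (gaussianPDF_pos 0 (Real.toNNReal_pos.2 ht).ne') x) ?_
    · simp [lintegral_ofReal_eq_one hf0 hfi hf1]
    · rw [← ofReal_heatP hf0 hfi ht.le]; exact ENNReal.ofReal_ne_top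
  rw [lintegral_pos_iff_support ((measurable_heatPDF hfm t).pow_const α),
    Function.support_eq_univ fun x => (hpos x).ne']
  simp

theorem lintegral_heatPDF_rpow_le_ofReal_integral_gaussDen_rpow (hfm : Measurable f)
    (hf0 : ∀ x, 0 ≤ f x) (hfi : Integrable f) (hf1 : ∫ x, f x = 1) (ht : 0 < t) (hα : 1 ≤ α) :
    ∫⁻ x, heatPDF f t x ^ α ≤ ENNReal.ofReal (∫ x, gaussDen t x ^ α) := by
  rw [← lintegral_gaussianPDF_rpow ht (by linarith)]
  exact lintegral_rpow_lconvolution_le (by fun_prop) (lintegral_ofReal_eq_one hf0 hfi hf1)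
    (measurable_gaussianPDF 0 _) hα

theorem ofReal_integral_gaussDen_rpow_le_lintegral_heatPDF_rpow (hfm : Measurable f)
    (hf0 : ∀ x, 0 ≤ f x) (hfi : Integrable f) (hf1 : ∫ x, f x = 1) (ht : 0 < t) (hα0 : 0 < α)
    (hα1 : α ≤ 1) : ENNReal.ofReal (∫ x, gaussDen t x ^ α) ≤ ∫⁻ x, heatPDF f t x ^ α := by
  rw [← lintegral_gaussianPDF_rpow ht hα0]
  exact lintegral_rpow_le_lintegral_rpow_lconvolution (by fun_prop)
    (lintegral_ofReal_eq_one hf0 hfi hf1) (measurable_gaussianPDF 0 _) hα0 hα1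

theorem lintegral_heatPDF_rpow_le_of_lt (hfm : Measurable f) (ht : 0 < t) {s : ℝ} (hts : t < s)
    (hα0 : 0 < α) (hα1 : α ≤ 1) :
    ∫⁻ x, heatPDF f t x ^ α ≤ ∫⁻ x, heatPDF f s x ^ α := by
  have hu : 0 < s - t := sub_pos.2 hts
  have hs : s.toNNReal = t.toNNReal + (s - t).toNNReal := by
    rw [← Real.toNNReal_add ht.le hu.le, add_sub_cancel]
  have hflow : heatPDF f s =ᵐ[volume] gaussianPDF 0 (s - t).toNNReal ⋆ₗ heatPDF f t := by
    rw [heatPDF, hs]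
    exact lconvolution_gaussianPDF_add_ae_eq (by fun_prop) (Real.toNNReal_pos.2 ht).ne'
      (Real.toNNReal_pos.2 hu).ne'
  calc ∫⁻ x, heatPDF f t x ^ α
      ≤ ∫⁻ x, (gaussianPDF 0 (s - t).toNNReal ⋆ₗ heatPDF f t) x ^ α :=
        lintegral_rpow_le_lintegral_rpow_lconvolution (measurable_gaussianPDF 0 _)
          (lintegral_gaussianPDF_eq_one 0 (Real.toNNReal_pos.2 hu).ne')
          (measurable_heatPDF hfm t) hα0 hα1
    _ = ∫⁻ x, heatPDF f s x ^ α := lintegral_congr_ae (hflow.fun_comp (· ^ α)).symm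

theorem integral_heatP_rpow_le_integral_gaussDen_rpow (hfm : Measurable f)
    (hf0 : ∀ x, 0 ≤ f x) (hfi : Integrable f) (hf1 : ∫ x, f x = 1) (ht : 0 < t) (hα : 1 ≤ α) :
    ∫ x, heatP f t x ^ α ≤ ∫ x, gaussDen t x ^ α := by
  rw [integral_heatP_rpow hfm hf0 hfi ht.le (by linarith),
    ← ENNReal.toReal_ofReal (integral_gaussDen_rpow_pos ht (by linarith)).le]
  exact ENNReal.toReal_mono ENNReal.ofReal_ne_top
    (lintegral_heatPDF_rpow_le_ofReal_integral_gaussDen_rpow hfm hf0 hfi hf1 ht hα)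

theorem integral_heatP_rpow_pos (hfm : Measurable f) (hf0 : ∀ x, 0 ≤ f x) (hfi : Integrable f)
    (hf1 : ∫ x, f x = 1) (ht : 0 < t) (hα : 1 ≤ α) : 0 < ∫ x, heatP f t x ^ α := by
  rw [integral_heatP_rpow hfm hf0 hfi ht.le (by linarith)]
  exact ENNReal.toReal_pos (lintegral_heatPDF_rpow_pos hfm hf0 hfi hf1 ht α).ne'
    (ne_top_of_le_ne_top ENNReal.ofReal_ne_top
      (lintegral_heatPDF_rpow_le_ofReal_integral_gaussDen_rpow hfm hf0 hfi hf1 ht hα))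

theorem integral_gaussDen_rpow_le_integral_heatP_rpow (hfm : Measurable f) (hf0 : ∀ x, 0 ≤ f x)
    (hfi : Integrable f) (hf1 : ∫ x, f x = 1) (ht : 0 < t) (hα0 : 0 < α) (hα1 : α ≤ 1)
    {s : ℝ} (hts : t < s) (hfin : Integrable fun x => heatP f s x ^ α) :
    ∫ x, gaussDen t x ^ α ≤ ∫ x, heatP f t x ^ α := by
  have hfin_s : ∫⁻ x, heatPDF f s x ^ α ≠ ∞ := by
    rw [← lintegral_ofReal_heatP_rpow hf0 hfi (ht.trans hts).le hα0.le,
      ← ofReal_integral_eq_lintegral_ofReal hfin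
        (ae_of_all _ fun x => rpow_nonneg (heatP_nonneg hf0 x) α)]
    exact ENNReal.ofReal_ne_top
  rw [integral_heatP_rpow hfm hf0 hfi ht.le hα0.le,
    ← ENNReal.toReal_ofReal (integral_gaussDen_rpow_pos ht hα0).le]
  exact ENNReal.toReal_mono
    (ne_top_of_le_ne_top hfin_s (lintegral_heatPDF_rpow_le_of_lt hfm ht hts hα0 hα1))
    (ofReal_integral_gaussDen_rpow_le_lintegral_heatPDF_rpow hfm hf0 hfi hf1 ht hα0 hα1)

end HeatFlow

/-- Among all densities along the heat flow at time t, the Gaussian of variance t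
minimizes the Rényi entropy: h_α(p(·,t)) ≥ h_α(G_t) = (1/2)log(2πt) + log α/(2(α-1));
equivalently ∫ p^α ≤ ∫ φ_t^α for α > 1 and ∫ p^α ≥ ∫ φ_t^α for 0 < α < 1. -/
theorem renyi_entropy_gaussian_lower_bound
    (f : ℝ → ℝ) (hfm : Measurable f) (hf0 : ∀ x, 0 ≤ f x)
    (hf1 : (∫ x : ℝ, f x) = 1)
    (α : ℝ) (hα : 0 < α) (hα1 : α ≠ 1)
    (t : ℝ) (ht : 0 < t) (htα : ltTalpha f α t) :
    1 / 2 * Real.log (2 * Real.pi * t) + 1 / (2 * (α - 1)) * Real.log α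
        ≤ renyiEnt f α t
    ∧ (1 < α →
        (∫ x : ℝ, heatP f t x ^ α) ≤ ∫ x : ℝ, gaussDen t x ^ α)
    ∧ (α < 1 →
        (∫ x : ℝ, gaussDen t x ^ α) ≤ ∫ x : ℝ, heatP f t x ^ α) := by
  have hfi : Integrable f := .of_integral_ne_zero (by rw [hf1]; exact one_ne_zero)
  have hGT (h : 1 < α) : ∫ x, heatP f t x ^ α ≤ ∫ x, gaussDen t x ^ α :=
    integral_heatP_rpow_le_integral_gaussDen_rpow hfm hf0 hfi hf1 ht h.le
  have hLT (h : α < 1) : ∫ x, gaussDen t x ^ α ≤ ∫ x, heatP f t x ^ α := by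
    obtain ⟨s, hts, -, hfin⟩ := htα
    rw [renyiFinite, if_neg hα1] at hfin
    exact integral_gaussDen_rpow_le_integral_heatP_rpow hfm hf0 hfi hf1 ht hα h.le hts hfin.1
  refine ⟨?_, hGT, hLT⟩
  rw [← inv_one_sub_mul_log_integral_gaussDen_rpow ht hα hα1, renyiEnt, if_neg hα1]
  rcases hα1.lt_or_gt with h | h
  · exact mul_le_mul_of_nonneg_left (log_le_log (integral_gaussDen_rpow_pos ht hα) (hLT h))
      (inv_nonneg.2 (by linarith))
  · exact mul_le_mul_of_nonpos_left
      (log_le_log (integral_heatP_rpow_pos hfm hf0 hfi hf1 ht h.le) (hGT h))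
      (inv_nonpos.2 (by linarith))
end
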